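/- arXiv:math/9909105 — 4 statements merged into one kernel-verified Lean document; each statement's English description precedes it below -/
import Mathlib

section
/- Any solution u of the turbulent steady equation (1/ρ)·d/dρ[ρ²(1−ρ)^{1−α} u'] + λ² e^u = 0 on (0,1) with zero flux at the axis and u continuous at 0 is strictly decreasing on (0,1). -/
open Real Set Filter Topology

/-!
The flux `F ρ = ρ² (1 - ρ)^(1-α) u' ρ` has derivative `-λ² ρ eᵘ < 0`, so it is strictly
decreasing on `(0, 1)`; as it tends to `0` at the axis, it is negative there. Since the weight
`ρ² (1 - ρ)^(1-α)` is positive, `u' < 0` on `(0, 1)`.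
-/

lemma strictAntiOn_Ioo_of_hasDerivAt_neg {f f' : ℝ → ℝ} {a b : ℝ}
    (hf : ∀ x ∈ Ioo a b, HasDerivAt f (f' x) x) (hf' : ∀ x ∈ Ioo a b, f' x < 0) :
    StrictAntiOn f (Ioo a b) := by
  refine strictAntiOn_of_hasDerivWithinAt_neg (f' := f') (convex_Ioo a b)
    (fun x hx ↦ (hf x hx).continuousAt.continuousWithinAt) ?_ ?_ <;> rw [interior_Ioo]
  exacts [fun x hx ↦ (hf x hx).hasDerivWithinAt, hf']

lemma StrictAntiOn.lt_of_tendsto_nhdsGT {f : ℝ → ℝ} {a b L : ℝ}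
    (hf : StrictAntiOn f (Ioo a b)) (hlim : Tendsto f (𝓝[>] a) (𝓝 L))
    {x : ℝ} (hx : x ∈ Ioo a b) : f x < L := by
  obtain ⟨y, hay, hyx⟩ := exists_between hx.1
  have hy : y ∈ Ioo a b := ⟨hay, hyx.trans hx.2⟩
  have hfy : f y ≤ L := by
    refine ge_of_tendsto hlim ?_
    filter_upwards [Ioo_mem_nhdsGT hy.1] with σ hσ
    exact (hf ⟨hσ.1, hσ.2.trans hy.2⟩ hy hσ.2).le
  calc f x < f y := hf hy hx hyx
    _ ≤ L := hfy

theorem stmt_7_general (α lam : ℝ) (hlam : 0 < lam)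
    (u u' : ℝ → ℝ)
    (hderiv : ∀ ρ ∈ Set.Ioo (0:ℝ) 1, HasDerivAt u (u' ρ) ρ)
    (hode : ∀ ρ ∈ Set.Ioo (0:ℝ) 1,
      HasDerivAt (fun s => s ^ 2 * (1 - s) ^ (1 - α) * u' s)
        (-(lam ^ 2 * ρ * Real.exp (u ρ))) ρ)
    (hflux : Tendsto (fun ρ => ρ ^ 2 * (1 - ρ) ^ (1 - α) * u' ρ)
      (nhdsWithin 0 (Set.Ioi 0)) (nhds 0)) :
    StrictAntiOn u (Set.Ioo (0:ℝ) 1) := by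
  have hflux_anti : StrictAntiOn (fun s => s ^ 2 * (1 - s) ^ (1 - α) * u' s) (Ioo 0 1) :=
    strictAntiOn_Ioo_of_hasDerivAt_neg hode fun ρ hρ ↦ by
      have := hρ.1
      have := exp_pos (u ρ)
      simp only [neg_lt_zero]
      positivity
  refine strictAntiOn_Ioo_of_hasDerivAt_neg hderiv fun ρ hρ ↦ ?_
  have hweight : 0 ≤ ρ ^ 2 * (1 - ρ) ^ (1 - α) := by
    have := sub_pos.2 hρ.2
    positivity
  exact neg_of_mul_neg_right (hflux_anti.lt_of_tendsto_nhdsGT hflux hρ) hweight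

/-- Any solution of the turbulent steady equation
`(1/ρ)·d/dρ[ρ²(1−ρ)^{1−α} u'] + λ² e^u = 0` on `(0,1)` with zero flux at the axis
and `u` continuous at `0` is strictly decreasing on `(0,1)`. -/
theorem stmt_7 (α lam : ℝ) (hα : α ∈ Set.Ioo (0:ℝ) 1) (hlam : 0 < lam)
    (u u' : ℝ → ℝ)
    (hderiv : ∀ ρ ∈ Set.Ioo (0:ℝ) 1, HasDerivAt u (u' ρ) ρ)
    (hode : ∀ ρ ∈ Set.Ioo (0:ℝ) 1,
      HasDerivAt (fun s => s ^ 2 * (1 - s) ^ (1 - α) * u' s)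
        (-(lam ^ 2 * ρ * Real.exp (u ρ))) ρ)
    (hcont : ContinuousWithinAt u (Set.Ici 0) 0)
    (hflux : Tendsto (fun ρ => ρ ^ 2 * (1 - ρ) ^ (1 - α) * u' ρ)
      (nhdsWithin 0 (Set.Ioi 0)) (nhds 0)) :
    StrictAntiOn u (Set.Ioo (0:ℝ) 1) :=
  stmt_7_general α lam hlam u u' hderiv hode hflux
end

section
/- Let u(ρ,ζ) be a C² solution of the laminar-flow problem (1−ρ²)∂_ζ u = (1/ρ)∂_ρ(ρ ∂_ρ u) + λ² e^u on (0,1)×(0,Z) with u(ρ,0)=0, u(1,ζ)=0, and lim_{ρ→0}ρ∂_ρ u = 0. If v(ρ) is a solution of the steady problem (1/ρ)(ρv')' + λ² e^v = 0 with v(1)=0, v ≥ 0, and u(ρ,ζ) ≤ v(ρ) holds initially (at ζ=0), then by the parabolic comparison principle u(ρ,ζ) ≤ v(ρ) for all ζ ∈ [0,Z). -/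
set_option maxHeartbeats 1000000

open Real Set Filter Topology

lemma aux_left_max {f : ℝ → ℝ} {d a t : ℝ} (hat : a < t) (hd : HasDerivAt f d t)
    (hmax : ∀ s ∈ Set.Icc a t, f s ≤ f t) : 0 ≤ d := by
  have hs : Tendsto (slope f t) (𝓝[<] t) (𝓝 d) :=
    (hasDerivAt_iff_tendsto_slope.1 hd).mono_left
      (nhdsWithin_mono _ fun x hx => ne_of_lt hx)
  refine ge_of_tendsto hs ?_
  filter_upwards [Ioo_mem_nhdsLT_of_mem ⟨hat, le_rfl⟩] with s hs'
  have h1 : f s - f t ≤ 0 := sub_nonpos.2 (hmax s ⟨hs'.1.le, hs'.2.le⟩)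
  have h2 : s - t < 0 := sub_neg.2 hs'.2
  have heq : slope f t s = (f s - f t) / (s - t) := slope_def_field f t s
  rw [heq, div_nonneg_iff]
  right
  exact ⟨h1, h2.le⟩

lemma aux_second {g G : ℝ → ℝ} {ρ₀ d : ℝ} (h0 : 0 < ρ₀) (h1 : ρ₀ < 1)
    (hg : ∀ r ∈ Set.Ioo (0:ℝ) 1, HasDerivAt g (G r) r)
    (hmax : ∀ r ∈ Set.Ioo (0:ℝ) 1, g r ≤ g ρ₀)
    (hH : HasDerivAt (fun r => r * G r) d ρ₀) : d ≤ 0 := by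
  by_contra hd
  push_neg at hd
  have hG0 : G ρ₀ = 0 := by
    have hl : IsLocalMax g ρ₀ := by
      filter_upwards [Ioo_mem_nhds h0 h1] with r hr using hmax r hr
    exact hl.hasDerivAt_eq_zero (hg ρ₀ ⟨h0, h1⟩)
  have hslope : Tendsto (slope (fun r => r * G r) ρ₀) (𝓝[>] ρ₀) (𝓝 d) :=
    (hasDerivAt_iff_tendsto_slope.1 hH).mono_left
      (nhdsWithin_mono _ fun x hx => ne_of_gt hx)
  have hev : ∀ᶠ r in 𝓝[>] ρ₀, (0:ℝ) < slope (fun r => r * G r) ρ₀ r :=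
    hslope.eventually (eventually_gt_nhds hd)
  have hev2 : ∀ᶠ r in 𝓝[>] ρ₀, 0 < G r ∧ r ∈ Set.Ioo (0:ℝ) 1 := by
    filter_upwards [hev, Ioo_mem_nhdsGT_of_mem ⟨le_rfl, h1⟩,
      self_mem_nhdsWithin] with r hr1 hr2 hr3
    have hr3' : ρ₀ < r := hr3
    have hrpos : 0 < r := h0.trans hr3'
    have hsl : slope (fun r => r * G r) ρ₀ r = (r * G r - ρ₀ * G ρ₀) / (r - ρ₀) :=
      slope_def_field _ ρ₀ r
    rw [hsl, hG0] at hr1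
    have hden : 0 < r - ρ₀ := sub_pos.2 hr3'
    have hpr : 0 < r * G r := by
      have h := hr1
      rw [mul_zero, sub_zero] at h
      rcases div_pos_iff.1 h with ⟨hn, _⟩ | ⟨_, hc⟩
      · exact hn
      · linarith
    have hGr : 0 < G r := by
      by_contra hG
      push_neg at hG
      nlinarith [mul_nonpos_of_nonneg_of_nonpos hrpos.le hG]
    exact ⟨hGr, hrpos, hr2.2⟩
  obtain ⟨b, hb, hsub⟩ := mem_nhdsGT_iff_exists_Ioo_subset.1 hev2
  have hb' : ρ₀ < b := hb
  set m : ℝ := (ρ₀ + min b 1) / 2 with hm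
  have hρm : ρ₀ < min b 1 := lt_min hb' h1
  have hm1 : ρ₀ < m := by simp only [hm]; linarith
  have hm2 : m < min b 1 := by simp only [hm]; linarith
  have hmb : m < b := hm2.trans_le (min_le_left _ _)
  have hmlt1 : m < 1 := hm2.trans_le (min_le_right _ _)
  have hmIoo : m ∈ Set.Ioo (0:ℝ) 1 := ⟨h0.trans hm1, hmlt1⟩
  have hIccsub : Set.Icc ρ₀ m ⊆ Set.Ioo (0:ℝ) 1 := fun r hr =>
    ⟨h0.trans_le hr.1, lt_of_le_of_lt hr.2 hmlt1⟩
  have hmono : StrictMonoOn g (Set.Icc ρ₀ m) := by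
    apply strictMonoOn_of_deriv_pos (convex_Icc _ _)
    · intro r hr
      exact (hg r (hIccsub hr)).continuousAt.continuousWithinAt
    · intro r hr
      rw [interior_Icc] at hr
      have hrb : r ∈ Set.Ioo ρ₀ b := ⟨hr.1, hr.2.trans hmb⟩
      rw [(hg r (hIccsub ⟨hr.1.le, hr.2.le⟩)).deriv]
      exact (hsub hrb).1
  have : g ρ₀ < g m := hmono ⟨le_rfl, hm1.le⟩ ⟨hm1.le, le_rfl⟩ hm1
  exact absurd (hmax m hmIoo) (not_le.2 this)

lemma aux_exp {a b U : ℝ} (hab : a ≤ b) (hb : b ≤ U) :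
    Real.exp b - Real.exp a ≤ Real.exp U * (b - a) := by
  have h1 : 1 + (a - b) ≤ Real.exp (a - b) := by linarith [Real.add_one_le_exp (a - b)]
  have h2 : Real.exp b * (1 + (a - b)) ≤ Real.exp b * Real.exp (a - b) :=
    mul_le_mul_of_nonneg_left h1 (Real.exp_pos b).le
  rw [← Real.exp_add] at h2
  have h3 : Real.exp (b + (a - b)) = Real.exp a := by ring_nf
  rw [h3] at h2
  have h4 : Real.exp b ≤ Real.exp U := Real.exp_le_exp.2 hb
  nlinarith [Real.exp_pos b]

lemma aux_sq {ρ : ℝ} (h0 : 0 < ρ) (hh : ρ ≤ 1/2) : 3/4 ≤ 1 - ρ ^ 2 := by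
  nlinarith

lemma aux_log2 {ρ : ℝ} (h0 : 0 < ρ) (h1 : ρ < 1) (hh : 1/2 < ρ) :
    -Real.log ρ ≤ 2 * (1 - ρ ^ 2) := by
  have hlog1 : -Real.log ρ ≤ ρ⁻¹ - 1 := by
    have h := Real.log_le_sub_one_of_pos (inv_pos.2 h0)
    rwa [Real.log_inv] at h
  have hinv1 : ρ⁻¹ * ρ = 1 := inv_mul_cancel₀ h0.ne'
  have hL0 : 0 ≤ -Real.log ρ := by
    have := Real.log_nonpos h0.le h1.le
    linarith
  have h2 : (-Real.log ρ) * ρ ≤ 1 - ρ := by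
    nlinarith [mul_le_mul_of_nonneg_right hlog1 h0.le, hinv1]
  nlinarith [h2, hL0, mul_nonneg hL0 (by linarith : (0:ℝ) ≤ ρ - 1/2),
    mul_nonneg h0.le (by linarith : (0:ℝ) ≤ 1 - ρ)]

lemma aux_contra {C A L δ σ : ℝ} (hC1 : 1 < C) (hA : 0 < A) (hL0 : 0 ≤ L)
    (hδ : 0 < δ) (hσ : 0 < σ) (hσδ : σ ≤ δ) (hcase : 3/4 ≤ A ∨ L ≤ 2 * A)
    (hfin : A * (3 * C ^ 2) * (δ * (A + 1 / C) + σ * L) + 4 * δ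
      ≤ (C - 1) * (δ * (A + 1 / C) + σ * L)) : False := by
  have hCpos : 0 < C := by linarith
  have h1C : 0 < 1 / C := by positivity
  have hCinv : C * (1 / C) = 1 := by field_simp
  have hPb0 : 0 ≤ δ * (A + 1 / C) + σ * L :=
    add_nonneg (mul_nonneg hδ.le (by linarith)) (mul_nonneg hσ.le hL0)
  rcases hcase with h34 | hL2
  · have hcoef : C - 1 ≤ A * (3 * C ^ 2) := by
      nlinarith [sq_nonneg (3 * C - 2),
        mul_nonneg (by linarith : (0:ℝ) ≤ A - 3/4) (sq_nonneg C)]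
    linarith [mul_le_mul_of_nonneg_right hcoef hPb0]
  · rcases le_or_gt (C - 1) (A * (3 * C ^ 2)) with hs | hs
    · linarith [mul_le_mul_of_nonneg_right hs hPb0]
    · have hσL : σ * L ≤ 2 * δ * A := by
        calc σ * L ≤ δ * L := mul_le_mul_of_nonneg_right hσδ hL0
          _ ≤ δ * (2 * A) := mul_le_mul_of_nonneg_left hL2 hδ.le
          _ = 2 * δ * A := by ring
      have hkey2 : ((C - 1) - A * (3 * C ^ 2)) * (σ * L)
          ≤ ((C - 1) - A * (3 * C ^ 2)) * (2 * δ * A) :=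
        mul_le_mul_of_nonneg_left hσL (by linarith)
      have h4δ : 4 * δ ≤ δ * (((C - 1) - A * (3 * C ^ 2)) * ((A + 1 / C) + 2 * A)) := by
        nlinarith [hfin, hkey2]
      have hCA : C ^ 2 * (1 / C) * A = C * A := by field_simp
      have hpoly : ((C - 1) - A * (3 * C ^ 2)) * ((A + 1 / C) + 2 * A) < 4 := by
        nlinarith [hCA, hCinv, hA, h1C, sq_nonneg (C * A)]
      nlinarith [h4δ, mul_lt_mul_of_pos_left hpoly hδ]

/-- Parabolic comparison for the laminar-flow problem: if `u` solves
`(1−ρ²)∂_ζu = (1/ρ)∂_ρ(ρ∂_ρu) + λ²e^u` with `u(ρ,0)=0`, `u(1,ζ)=0`, zero flux at the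
axis, and `v` is a nonnegative steady solution of `(1/ρ)(ρv')' + λ²e^v = 0`, `v(1)=0`,
with `u ≤ v` at `ζ = 0`, then `u(ρ,ζ) ≤ v(ρ)` throughout. -/
theorem stmt_9 (lam Z : ℝ) (hlam : 0 < lam) (hZ : 0 < Z)
    (u uζ uρ w : ℝ → ℝ → ℝ) (v v' : ℝ → ℝ)
    (hucont : ContinuousOn (fun p : ℝ × ℝ => u p.1 p.2)
      (Set.Icc (0:ℝ) 1 ×ˢ Set.Ico (0:ℝ) Z))
    (huζ : ∀ ρ ∈ Set.Ioo (0:ℝ) 1, ∀ ζ ∈ Set.Ioo (0:ℝ) Z,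
      HasDerivAt (fun t => u ρ t) (uζ ρ ζ) ζ)
    (huρ : ∀ ρ ∈ Set.Ioo (0:ℝ) 1, ∀ ζ ∈ Set.Ioo (0:ℝ) Z,
      HasDerivAt (fun r => u r ζ) (uρ ρ ζ) ρ)
    (hw : ∀ ρ ∈ Set.Ioo (0:ℝ) 1, ∀ ζ ∈ Set.Ioo (0:ℝ) Z,
      HasDerivAt (fun r => r * uρ r ζ) (w ρ ζ) ρ)
    (hpde : ∀ ρ ∈ Set.Ioo (0:ℝ) 1, ∀ ζ ∈ Set.Ioo (0:ℝ) Z,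
      (1 - ρ ^ 2) * uζ ρ ζ = (1 / ρ) * w ρ ζ + lam ^ 2 * Real.exp (u ρ ζ))
    (hinlet : ∀ ρ ∈ Set.Icc (0:ℝ) 1, u ρ 0 = 0)
    (hwall : ∀ ζ ∈ Set.Ico (0:ℝ) Z, u 1 ζ = 0)
    (hflux : ∀ ζ ∈ Set.Ioo (0:ℝ) Z,
      Tendsto (fun ρ => ρ * uρ ρ ζ) (nhdsWithin 0 (Set.Ioi 0)) (nhds 0))
    (hvcont : ContinuousOn v (Set.Icc (0:ℝ) 1))
    (hvderiv : ∀ ρ ∈ Set.Ioo (0:ℝ) 1, HasDerivAt v (v' ρ) ρ)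
    (hvode : ∀ ρ ∈ Set.Ioo (0:ℝ) 1,
      HasDerivAt (fun s => s * v' s) (-(lam ^ 2 * ρ * Real.exp (v ρ))) ρ)
    (hvwall : v 1 = 0)
    (hvpos : ∀ ρ ∈ Set.Icc (0:ℝ) 1, 0 ≤ v ρ)
    (hinit : ∀ ρ ∈ Set.Icc (0:ℝ) 1, u ρ 0 ≤ v ρ) :
    ∀ ρ ∈ Set.Icc (0:ℝ) 1, ∀ ζ ∈ Set.Ico (0:ℝ) Z, u ρ ζ ≤ v ρ := by
  intro ρb hρb ζb hζb
  obtain ⟨ζ₁, hζ₁pos, hζ₁Z, hζbζ₁⟩ : ∃ ζ₁ : ℝ, 0 < ζ₁ ∧ ζ₁ < Z ∧ ζb ≤ ζ₁ :=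
    ⟨(ζb + Z) / 2, by constructor; · linarith [hζb.1]
                      constructor <;> linarith [hζb.2]⟩
  -- bound for u on the compact cylinder
  have hKsub : (Set.Icc (0:ℝ) 1 ×ˢ Set.Icc (0:ℝ) ζ₁) ⊆
      Set.Icc (0:ℝ) 1 ×ˢ Set.Ico (0:ℝ) Z :=
    fun p hp => ⟨hp.1, hp.2.1, lt_of_le_of_lt hp.2.2 hζ₁Z⟩
  have hKcomp : IsCompact (Set.Icc (0:ℝ) 1 ×ˢ Set.Icc (0:ℝ) ζ₁) :=
    isCompact_Icc.prod isCompact_Icc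
  have hKne : (Set.Icc (0:ℝ) 1 ×ˢ Set.Icc (0:ℝ) ζ₁).Nonempty :=
    ⟨(0, 0), ⟨⟨le_rfl, zero_le_one⟩, le_rfl, hζ₁pos.le⟩⟩
  obtain ⟨pM, hpM, hpMmax⟩ := hKcomp.exists_isMaxOn hKne (hucont.mono hKsub)
  obtain ⟨B, hB0, hB⟩ : ∃ B : ℝ, 0 ≤ B ∧
      ∀ ρ' ∈ Set.Icc (0:ℝ) 1, ∀ ζ' ∈ Set.Icc (0:ℝ) ζ₁, u ρ' ζ' ≤ B := by
    refine ⟨max (u pM.1 pM.2) 0, le_max_right _ _, ?_⟩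
    intro ρ' h1 ζ' h2
    have := hpMmax (show ((ρ', ζ') : ℝ × ℝ) ∈ _ from ⟨h1, h2⟩)
    exact le_trans this (le_max_left _ _)
  obtain ⟨C, hC1, hcC⟩ : ∃ C : ℝ, 1 < C ∧ lam ^ 2 * Real.exp B = C - 1 := by
    refine ⟨lam ^ 2 * Real.exp B + 1, ?_, by ring⟩
    have : 0 < lam ^ 2 * Real.exp B := by positivity
    linarith
  have hCpos : 0 < C := by linarith
  have hCinv : C * (1 / C) = 1 := by field_simp
  -- the key barrier estimate
  have key2 : ∀ δ σ : ℝ, 0 < σ → σ ≤ δ → ∀ ρ' ∈ Set.Ioc (0:ℝ) 1, ∀ ζ' ∈ Set.Icc (0:ℝ) ζ₁,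
      u ρ' ζ' - v ρ' ≤ δ * Real.exp (3 * C ^ 2 * ζ') * (1 - ρ' ^ 2 + 1 / C) +
        σ * Real.exp (3 * C ^ 2 * ζ') * (-Real.log ρ') := by
    intro δ σ hσ hσδ
    have hδ : 0 < δ := lt_of_lt_of_le hσ hσδ
    by_contra hcon
    push_neg at hcon
    obtain ⟨ρh, hρh, ζh, hζh, hgt⟩ := hcon
    set Φ : ℝ × ℝ → ℝ := fun p => u p.1 p.2 - v p.1 -
      (δ * Real.exp (3 * C ^ 2 * p.2) * (1 - p.1 ^ 2 + 1 / C) +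
        σ * Real.exp (3 * C ^ 2 * p.2) * (-Real.log p.1)) with hΦdef
    have hΦval : ∀ a b : ℝ, Φ (a, b) = u a b - v a -
        (δ * Real.exp (3 * C ^ 2 * b) * (1 - a ^ 2 + 1 / C) +
          σ * Real.exp (3 * C ^ 2 * b) * (-Real.log a)) := fun a b => rfl
    obtain ⟨ρm, hρm0, hρm1, hρmlog⟩ :
        ∃ ρm : ℝ, 0 < ρm ∧ ρm < 1 ∧ Real.log ρm = -((B + 1) / σ) := by
      refine ⟨Real.exp (-((B + 1) / σ)), Real.exp_pos _, ?_, Real.log_exp _⟩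
      have h1 : 0 < (B + 1) / σ := by positivity
      calc Real.exp (-((B + 1) / σ)) < Real.exp 0 := Real.exp_lt_exp.2 (by linarith)
      _ = 1 := Real.exp_zero
    -- small ρ values give negative Φ
    have hsmall : ∀ ρ' ∈ Set.Ioc (0:ℝ) 1, ∀ ζ' ∈ Set.Icc (0:ℝ) ζ₁, ρ' < ρm →
        Φ (ρ', ζ') < 0 := by
      intro ρ' hρ' ζ' hζ' hlt
      rw [hΦval]
      have hu : u ρ' ζ' ≤ B := hB ρ' ⟨hρ'.1.le, hρ'.2⟩ ζ' hζ'
      have hv : 0 ≤ v ρ' := hvpos ρ' ⟨hρ'.1.le, hρ'.2⟩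
      have hE1 : 1 ≤ Real.exp (3 * C ^ 2 * ζ') := by
        apply Real.one_le_exp
        have := hζ'.1
        positivity
      have hsq : ρ' ^ 2 ≤ 1 := by nlinarith [hρ'.1, hρ'.2]
      have hbar : 0 ≤ δ * Real.exp (3 * C ^ 2 * ζ') * (1 - ρ' ^ 2 + 1 / C) := by
        have h1C : 0 < 1 / C := by positivity
        exact mul_nonneg (mul_nonneg hδ.le (Real.exp_pos _).le) (by linarith)
      have hlog : Real.log ρ' < -((B + 1) / σ) := by
        have := Real.log_lt_log hρ'.1 hlt
        rwa [hρmlog] at this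
      have hL : (B + 1) / σ < -Real.log ρ' := by linarith
      have hL0 : 0 < -Real.log ρ' := lt_trans (by positivity) hL
      have hterm : B + 1 < σ * Real.exp (3 * C ^ 2 * ζ') * (-Real.log ρ') := by
        have h1 : B + 1 = σ * ((B + 1) / σ) := by
          rw [mul_div_cancel₀ _ (ne_of_gt hσ)]
        have h2 : σ * ((B + 1) / σ) < σ * (-Real.log ρ') :=
          (mul_lt_mul_iff_right₀ hσ).2 hL
        have h3 : σ * (-Real.log ρ') ≤ σ * Real.exp (3 * C ^ 2 * ζ') * (-Real.log ρ') := by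
          nlinarith [hL0, hE1, hσ]
        linarith
      linarith
    -- the compact region and the touching point
    have hTsub : (Set.Icc ρm 1 ×ˢ Set.Icc (0:ℝ) ζ₁) ⊆
        Set.Icc (0:ℝ) 1 ×ˢ Set.Ico (0:ℝ) Z :=
      fun p hp => ⟨⟨hρm0.le.trans hp.1.1, hp.1.2⟩, hp.2.1, lt_of_le_of_lt hp.2.2 hζ₁Z⟩
    have hΦcont : ContinuousOn Φ (Set.Icc ρm 1 ×ˢ Set.Icc (0:ℝ) ζ₁) := by
      apply ContinuousOn.sub
      · apply ContinuousOn.sub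
        · exact hucont.mono hTsub
        · exact hvcont.comp continuous_fst.continuousOn
            (fun p hp => ⟨hρm0.le.trans hp.1.1, hp.1.2⟩)
      · apply ContinuousOn.add
        · apply ContinuousOn.mul
          · exact (continuous_const.mul
              (Real.continuous_exp.comp (continuous_const.mul continuous_snd))).continuousOn
          · exact ((continuous_const.sub ((continuous_pow 2).comp continuous_fst)).add
              continuous_const).continuousOn
        · apply ContinuousOn.mul
          · exact (continuous_const.mul
              (Real.continuous_exp.comp (continuous_const.mul continuous_snd))).continuousOn
          · intro p hp
            have hne : p.1 ≠ 0 := ne_of_gt (lt_of_lt_of_le hρm0 hp.1.1)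
            exact (((Real.continuousAt_log hne).comp
              continuousAt_fst).neg).continuousWithinAt
    set S : Set (ℝ × ℝ) := (Set.Icc ρm 1 ×ˢ Set.Icc (0:ℝ) ζ₁) ∩ Φ ⁻¹' Set.Ici 0
      with hSdef
    have hSne : S.Nonempty := by
      refine ⟨(ρh, ζh), ⟨?_, hζh⟩, ?_⟩
      · constructor
        · by_contra hlt
          push_neg at hlt
          have := hsmall ρh hρh ζh hζh hlt
          rw [hΦval] at this
          linarith
        · exact hρh.2
      · have : 0 ≤ Φ (ρh, ζh) := by rw [hΦval]; linarith
        exact this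
    have hScl : IsClosed S :=
      hΦcont.preimage_isClosed_of_isClosed (isClosed_Icc.prod isClosed_Icc) isClosed_Ici
    have hScomp : IsCompact S :=
      hKcomp.of_isClosed_subset hScl
        (fun p hp => ⟨⟨hρm0.le.trans hp.1.1.1, hp.1.1.2⟩, hp.1.2⟩)
    obtain ⟨q, hqS, hqmin⟩ := hScomp.exists_isMinOn hSne continuous_snd.continuousOn
    obtain ⟨ρ₀, ζ₀⟩ := q
    obtain ⟨⟨⟨hq1', hq2'⟩, hq3', hq4'⟩, hq5'⟩ := hqS
    have hq1 : ρm ≤ ρ₀ := hq1'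
    have hq2 : ρ₀ ≤ 1 := hq2'
    have hq3 : 0 ≤ ζ₀ := hq3'
    have hq4 : ζ₀ ≤ ζ₁ := hq4'
    have hq5 : 0 ≤ Φ (ρ₀, ζ₀) := hq5'
    have hρ₀pos : 0 < ρ₀ := lt_of_lt_of_le hρm0 hq1
    -- Claim 1: strictly negative before time ζ₀
    have hC1' : ∀ ρ' ∈ Set.Ioc (0:ℝ) 1, ∀ t ∈ Set.Icc (0:ℝ) ζ₁, t < ζ₀ →
        Φ (ρ', t) < 0 := by
      intro ρ' hρ' t ht htζ
      rcases lt_or_ge ρ' ρm with h | h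
      · exact hsmall ρ' hρ' t ht h
      · by_contra hge
        push_neg at hge
        have hmem : ((ρ', t) : ℝ × ℝ) ∈ S := ⟨⟨⟨h, hρ'.2⟩, ht⟩, hge⟩
        have hle : ζ₀ ≤ t := hqmin hmem
        exact absurd hle (not_le.2 htζ)
    clear hqmin hSne hScl hScomp hq1' hq2' hq3' hq4' hq5' hSdef
    clear S
    clear_value Φ
    clear hΦdef
    -- Claim 2: ζ₀ > 0
    have hζ₀pos : 0 < ζ₀ := by
      rcases lt_or_eq_of_le hq3 with h | h
      · exact h
      · exfalso
        have h0 := hq5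
        rw [hΦval] at h0
        rw [← h] at h0
        have huv : u ρ₀ 0 ≤ v ρ₀ := hinit ρ₀ ⟨hρ₀pos.le, hq2⟩
        have hex : Real.exp (3 * C ^ 2 * 0) = 1 := by rw [mul_zero, Real.exp_zero]
        rw [hex] at h0
        have hsq : ρ₀ ^ 2 ≤ 1 := by nlinarith [hρ₀pos.le, hq2]
        have hlog0 : 0 ≤ -Real.log ρ₀ := by
          have := Real.log_nonpos hρ₀pos.le hq2
          linarith
        have h1C : 0 < 1 / C := by positivity
        have t2 : 0 ≤ σ * -Real.log ρ₀ := mul_nonneg hσ.le hlog0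
        have t3 : 0 < δ * (1 - ρ₀ ^ 2 + 1 / C) := by
          apply mul_pos hδ
          linarith
        nlinarith [t2, t3, huv]
    -- Claim 3: at time ζ₀ everything is ≤ 0
    have hC3 : ∀ ρ' ∈ Set.Ioc (0:ℝ) 1, Φ (ρ', ζ₀) ≤ 0 := by
      intro ρ' hρ'
      by_contra hpos
      push_neg at hpos
      have hρ'ρm : ρm ≤ ρ' := by
        by_contra h
        push_neg at h
        exact absurd (hsmall ρ' hρ' ζ₀ ⟨hq3, hq4⟩ h) (not_lt.2 hpos.le)
      have hcw : ContinuousWithinAt (fun t => Φ (ρ', t)) (Set.Icc (0:ℝ) ζ₁) ζ₀ := by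
        have hmem : ((ρ', ζ₀) : ℝ × ℝ) ∈ Set.Icc ρm 1 ×ˢ Set.Icc (0:ℝ) ζ₁ :=
          ⟨⟨hρ'ρm, hρ'.2⟩, ⟨hq3, hq4⟩⟩
        have hmap : Set.MapsTo (fun t : ℝ => ((ρ', t) : ℝ × ℝ)) (Set.Icc (0:ℝ) ζ₁)
            (Set.Icc ρm 1 ×ˢ Set.Icc (0:ℝ) ζ₁) := fun t ht => ⟨⟨hρ'ρm, hρ'.2⟩, ht⟩
        exact (hΦcont (ρ', ζ₀) hmem).comp
          ((continuous_const.prodMk continuous_id).continuousWithinAt) hmap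
      haveI hnb : (𝓝[Set.Ioo (0:ℝ) ζ₀] ζ₀).NeBot := by
        apply mem_closure_iff_nhdsWithin_neBot.1
        rw [closure_Ioo (ne_of_lt hζ₀pos)]
        exact ⟨hζ₀pos.le, le_rfl⟩
      have hten : Tendsto (fun t => Φ (ρ', t)) (𝓝[Set.Ioo (0:ℝ) ζ₀] ζ₀)
          (𝓝 (Φ (ρ', ζ₀))) :=
        hcw.tendsto.mono_left (nhdsWithin_mono _ (fun t ht => ⟨ht.1.le, ht.2.le.trans hq4⟩))
      have hev : ∀ᶠ t in 𝓝[Set.Ioo (0:ℝ) ζ₀] ζ₀, 0 < Φ (ρ', t) :=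
        hten.eventually (eventually_gt_nhds hpos)
      obtain ⟨t, ht, htmem⟩ := (hev.and self_mem_nhdsWithin).exists
      exact absurd (hC1' ρ' hρ' t ⟨htmem.1.le, htmem.2.le.trans hq4⟩ htmem.2) (not_lt.2 ht.le)
    -- at the touching point Φ = 0
    have hφq0 : Φ (ρ₀, ζ₀) = 0 := le_antisymm (hC3 ρ₀ ⟨hρ₀pos, hq2⟩) hq5
    -- Claim 4: ρ₀ < 1
    have hρ₀lt1 : ρ₀ < 1 := by
      rcases lt_or_eq_of_le hq2 with h | h
      · exact h
      · exfalso
        have h0 := hφq0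
        rw [hΦval, h] at h0
        rw [hwall ζ₀ ⟨hq3, lt_of_le_of_lt hq4 hζ₁Z⟩, hvwall, Real.log_one] at h0
        have hE : 0 < Real.exp (3 * C ^ 2 * ζ₀) := Real.exp_pos _
        have h1C : 0 < 1 / C := by positivity
        have : δ * Real.exp (3 * C ^ 2 * ζ₀) * (1 / C) > 0 := by positivity
        rw [one_pow] at h0
        nlinarith
    have hζ₀Z : ζ₀ ∈ Set.Ioo (0:ℝ) Z := ⟨hζ₀pos, lt_of_le_of_lt hq4 hζ₁Z⟩
    have hρ₀Ioo : ρ₀ ∈ Set.Ioo (0:ℝ) 1 := ⟨hρ₀pos, hρ₀lt1⟩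
    have hE : 0 < Real.exp (3 * C ^ 2 * ζ₀) := Real.exp_pos _
    have hL0 : 0 ≤ -Real.log ρ₀ := by
      have := Real.log_nonpos hρ₀pos.le hq2
      linarith
    have hx : 0 < 1 - ρ₀ ^ 2 := by nlinarith [hρ₀pos, hρ₀lt1]
    have h1C : 0 < 1 / C := by positivity
    -- time derivative at the touching point
    have hexp : HasDerivAt (fun t : ℝ => Real.exp (3 * C ^ 2 * t))
        (Real.exp (3 * C ^ 2 * ζ₀) * (3 * C ^ 2)) ζ₀ := by
      have h := ((hasDerivAt_id ζ₀).const_mul (3 * C ^ 2)).exp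
      simpa using h
    have hfd : HasDerivAt
        (fun t => u ρ₀ t - v ρ₀ - (δ * Real.exp (3 * C ^ 2 * t) * (1 - ρ₀ ^ 2 + 1 / C)
          + σ * Real.exp (3 * C ^ 2 * t) * (-Real.log ρ₀)))
        (uζ ρ₀ ζ₀ - (δ * (Real.exp (3 * C ^ 2 * ζ₀) * (3 * C ^ 2)) * (1 - ρ₀ ^ 2 + 1 / C)
          + σ * (Real.exp (3 * C ^ 2 * ζ₀) * (3 * C ^ 2)) * (-Real.log ρ₀))) ζ₀ :=
      ((huζ ρ₀ hρ₀Ioo ζ₀ hζ₀Z).sub_const (v ρ₀)).sub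
        (((hexp.const_mul δ).mul_const _).add ((hexp.const_mul σ).mul_const _))
    have hd1 : 0 ≤ uζ ρ₀ ζ₀ - (δ * (Real.exp (3 * C ^ 2 * ζ₀) * (3 * C ^ 2)) * (1 - ρ₀ ^ 2 + 1 / C)
        + σ * (Real.exp (3 * C ^ 2 * ζ₀) * (3 * C ^ 2)) * (-Real.log ρ₀)) := by
      refine aux_left_max hζ₀pos hfd ?_
      intro s hs
      rcases eq_or_lt_of_le hs.2 with heq | hlt
      · rw [heq]
      · have h1 := hC1' ρ₀ ⟨hρ₀pos, hq2⟩ s ⟨hs.1, hs.2.trans hq4⟩ hlt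
        rw [hΦval] at h1
        have h2 := hφq0
        rw [hΦval] at h2
        linarith
    -- spatial derivatives at the touching point
    have hgd : ∀ r ∈ Set.Ioo (0:ℝ) 1, HasDerivAt
        (fun r => u r ζ₀ - v r - (δ * Real.exp (3 * C ^ 2 * ζ₀) * (1 - r ^ 2 + 1 / C)
          + σ * Real.exp (3 * C ^ 2 * ζ₀) * (-Real.log r)))
        (uρ r ζ₀ - v' r - (δ * Real.exp (3 * C ^ 2 * ζ₀) * (-(2 * r))
          + σ * Real.exp (3 * C ^ 2 * ζ₀) * (-r⁻¹))) r := by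
      intro r hr
      have hpow : HasDerivAt (fun r : ℝ => 1 - r ^ 2 + 1 / C) (-(2 * r)) r := by
        have h := ((hasDerivAt_pow 2 r).const_sub 1).add_const (1 / C)
        norm_num at h
        exact h.add_const (1 / C)
      have hlogd : HasDerivAt (fun r : ℝ => -Real.log r) (-r⁻¹) r :=
        (Real.hasDerivAt_log (ne_of_gt hr.1)).neg
      exact ((huρ r hr ζ₀ hζ₀Z).sub (hvderiv r hr)).sub
        ((hpow.const_mul (δ * Real.exp (3 * C ^ 2 * ζ₀))).add
          (hlogd.const_mul (σ * Real.exp (3 * C ^ 2 * ζ₀))))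
    have hHt : HasDerivAt
        (fun r => r * uρ r ζ₀ - r * v' r +
          (2 * (δ * Real.exp (3 * C ^ 2 * ζ₀)) * r ^ 2 + σ * Real.exp (3 * C ^ 2 * ζ₀)))
        (w ρ₀ ζ₀ + lam ^ 2 * ρ₀ * Real.exp (v ρ₀)
          + 4 * δ * Real.exp (3 * C ^ 2 * ζ₀) * ρ₀) ρ₀ := by
      have h := ((hw ρ₀ hρ₀Ioo ζ₀ hζ₀Z).sub (hvode ρ₀ hρ₀Ioo)).add
        (((hasDerivAt_pow 2 ρ₀).const_mul
          (2 * (δ * Real.exp (3 * C ^ 2 * ζ₀)))).add_const (σ * Real.exp (3 * C ^ 2 * ζ₀)))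
      refine h.congr_deriv ?_
      rw [Nat.cast_ofNat, show (2:ℕ) - 1 = 1 from rfl, pow_one]
      ring
    have hHeq : (fun r => r * (uρ r ζ₀ - v' r - (δ * Real.exp (3 * C ^ 2 * ζ₀) * (-(2 * r))
          + σ * Real.exp (3 * C ^ 2 * ζ₀) * (-r⁻¹))))
        =ᶠ[𝓝 ρ₀] (fun r => r * uρ r ζ₀ - r * v' r +
          (2 * (δ * Real.exp (3 * C ^ 2 * ζ₀)) * r ^ 2 + σ * Real.exp (3 * C ^ 2 * ζ₀))) := by
      filter_upwards [eventually_ne_nhds hρ₀pos.ne'] with r hrne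
      field_simp
      ring
    have hd2 : w ρ₀ ζ₀ + lam ^ 2 * ρ₀ * Real.exp (v ρ₀)
        + 4 * δ * Real.exp (3 * C ^ 2 * ζ₀) * ρ₀ ≤ 0 := by
      refine aux_second hρ₀pos hρ₀lt1 hgd ?_ (hHt.congr_of_eventuallyEq hHeq)
      intro r hr
      have h1 := hC3 r ⟨hr.1, hr.2.le⟩
      rw [hΦval] at h1
      have h2 := hφq0
      rw [hΦval] at h2
      linarith
    -- the PDE and the exponential bound
    have hpde0 := hpde ρ₀ hρ₀Ioo ζ₀ hζ₀Z
    have huB : u ρ₀ ζ₀ ≤ B := hB ρ₀ ⟨hρ₀pos.le, hq2⟩ ζ₀ ⟨hq3, hq4⟩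
    have huv : u ρ₀ ζ₀ - v ρ₀ = δ * Real.exp (3 * C ^ 2 * ζ₀) * (1 - ρ₀ ^ 2 + 1 / C)
        + σ * Real.exp (3 * C ^ 2 * ζ₀) * (-Real.log ρ₀) := by
      have h2 := hφq0
      rw [hΦval] at h2
      linarith
    have huv0 : v ρ₀ ≤ u ρ₀ ζ₀ := by
      have t1 : 0 ≤ δ * Real.exp (3 * C ^ 2 * ζ₀) * (1 - ρ₀ ^ 2 + 1 / C) :=
        mul_nonneg (mul_nonneg hδ.le hE.le) (by linarith)
      have t2 : 0 ≤ σ * Real.exp (3 * C ^ 2 * ζ₀) * (-Real.log ρ₀) :=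
        mul_nonneg (mul_nonneg hσ.le hE.le) hL0
      linarith [huv]
    have hexpB := aux_exp huv0 huB
    rw [huv] at hexpB
    -- combine everything
    have hw2 : w ρ₀ ζ₀ ≤ -(lam ^ 2 * ρ₀ * Real.exp (v ρ₀))
        - 4 * δ * Real.exp (3 * C ^ 2 * ζ₀) * ρ₀ := by linarith
    have hm2 : (1 / ρ₀) * w ρ₀ ζ₀ ≤ -(lam ^ 2 * Real.exp (v ρ₀))
        - 4 * δ * Real.exp (3 * C ^ 2 * ζ₀) := by
      have hρinv : (0:ℝ) < 1 / ρ₀ := by positivity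
      calc (1 / ρ₀) * w ρ₀ ζ₀
          ≤ (1 / ρ₀) * (-(lam ^ 2 * ρ₀ * Real.exp (v ρ₀))
            - 4 * δ * Real.exp (3 * C ^ 2 * ζ₀) * ρ₀) :=
            mul_le_mul_of_nonneg_left hw2 hρinv.le
        _ = -(lam ^ 2 * Real.exp (v ρ₀)) - 4 * δ * Real.exp (3 * C ^ 2 * ζ₀) := by
            field_simp
    have hm1 : (1 - ρ₀ ^ 2) * (δ * (Real.exp (3 * C ^ 2 * ζ₀) * (3 * C ^ 2)) * (1 - ρ₀ ^ 2 + 1 / C)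
          + σ * (Real.exp (3 * C ^ 2 * ζ₀) * (3 * C ^ 2)) * (-Real.log ρ₀))
        ≤ (1 - ρ₀ ^ 2) * uζ ρ₀ ζ₀ :=
      mul_le_mul_of_nonneg_left (by linarith) hx.le
    have hre : lam ^ 2 * (Real.exp B * (δ * Real.exp (3 * C ^ 2 * ζ₀) * (1 - ρ₀ ^ 2 + 1 / C)
          + σ * Real.exp (3 * C ^ 2 * ζ₀) * (-Real.log ρ₀)))
        = (C - 1) * ((δ * (1 - ρ₀ ^ 2 + 1 / C) + σ * (-Real.log ρ₀))
          * Real.exp (3 * C ^ 2 * ζ₀)) := by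
      rw [← hcC]
      ring
    have hlam2 : lam ^ 2 * (Real.exp (u ρ₀ ζ₀) - Real.exp (v ρ₀))
        ≤ (C - 1) * ((δ * (1 - ρ₀ ^ 2 + 1 / C) + σ * (-Real.log ρ₀))
          * Real.exp (3 * C ^ 2 * ζ₀)) := by
      rw [← hre]
      exact mul_le_mul_of_nonneg_left hexpB (by positivity)
    have hstep : ((1 - ρ₀ ^ 2) * (3 * C ^ 2) * (δ * (1 - ρ₀ ^ 2 + 1 / C) + σ * (-Real.log ρ₀))
          + 4 * δ) * Real.exp (3 * C ^ 2 * ζ₀)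
        ≤ ((C - 1) * (δ * (1 - ρ₀ ^ 2 + 1 / C) + σ * (-Real.log ρ₀)))
          * Real.exp (3 * C ^ 2 * ζ₀) := by
      nlinarith [hm1, hpde0, hm2, hlam2]
    have hfin : (1 - ρ₀ ^ 2) * (3 * C ^ 2) * (δ * (1 - ρ₀ ^ 2 + 1 / C) + σ * (-Real.log ρ₀))
          + 4 * δ
        ≤ (C - 1) * (δ * (1 - ρ₀ ^ 2 + 1 / C) + σ * (-Real.log ρ₀)) :=
      le_of_mul_le_mul_right hstep hE
    refine aux_contra hC1 hx hL0 hδ hσ hσδ ?_ hfin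
    rcases le_or_gt ρ₀ (1/2) with hh | hh
    · exact Or.inl (aux_sq hρ₀pos hh)
    · exact Or.inr (aux_log2 hρ₀pos hρ₀lt1 hh)
  -- pass to the limit δ = σ → 0
  have key : ∀ ρ' ∈ Set.Ioc (0:ℝ) 1, ∀ ζ' ∈ Set.Icc (0:ℝ) ζ₁, u ρ' ζ' ≤ v ρ' := by
    intro ρ' hρ' ζ' hζ'
    by_contra hgt
    push_neg at hgt
    have ha : 0 < u ρ' ζ' - v ρ' := sub_pos.2 hgt
    obtain ⟨Q, hQdef, hQ0⟩ : ∃ Q : ℝ, Q = Real.exp (3 * C ^ 2 * ζ') * (1 - ρ' ^ 2 + 1 / C)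
        + Real.exp (3 * C ^ 2 * ζ') * (-Real.log ρ') ∧ 0 ≤ Q := by
      refine ⟨_, rfl, ?_⟩
      have hE := (Real.exp_pos (3 * C ^ 2 * ζ')).le
      have h1 : 0 ≤ 1 - ρ' ^ 2 + 1 / C := by
        have hs : ρ' ^ 2 ≤ 1 := by nlinarith [hρ'.1, hρ'.2]
        have h1c : 0 < 1 / C := by positivity
        linarith
      have h2 : 0 ≤ -Real.log ρ' := by
        have := Real.log_nonpos hρ'.1.le hρ'.2
        linarith
      exact add_nonneg (mul_nonneg hE h1) (mul_nonneg hE h2)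
    have hδpos : 0 < (u ρ' ζ' - v ρ') / (Q + 1) := div_pos ha (by linarith)
    have h := key2 ((u ρ' ζ' - v ρ') / (Q + 1)) ((u ρ' ζ' - v ρ') / (Q + 1))
      hδpos le_rfl ρ' hρ' ζ' hζ'
    have hmul : ((u ρ' ζ' - v ρ') / (Q + 1)) * (Q + 1) = u ρ' ζ' - v ρ' :=
      div_mul_cancel₀ _ (by linarith)
    have h2 : ((u ρ' ζ' - v ρ') / (Q + 1)) * Q
        = ((u ρ' ζ' - v ρ') / (Q + 1)) * Real.exp (3 * C ^ 2 * ζ') * (1 - ρ' ^ 2 + 1 / C)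
          + ((u ρ' ζ' - v ρ') / (Q + 1)) * Real.exp (3 * C ^ 2 * ζ') * (-Real.log ρ') := by
      rw [hQdef]
      ring
    linarith [h, h2, hmul, hδpos]
  -- conclusion, including the axis by continuity
  rcases eq_or_lt_of_le hρb.1 with h0 | h0
  · haveI : (𝓝[Set.Ioc (0:ℝ) 1] (0:ℝ)).NeBot := by
      apply mem_closure_iff_nhdsWithin_neBot.1
      rw [closure_Ioc (zero_ne_one : (0:ℝ) ≠ 1)]
      exact ⟨le_rfl, zero_le_one⟩
    have hv0 : ContinuousWithinAt v (Set.Icc (0:ℝ) 1) 0 := hvcont 0 ⟨le_rfl, zero_le_one⟩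
    have hu0 : ContinuousWithinAt (fun p : ℝ × ℝ => u p.1 p.2)
        (Set.Icc (0:ℝ) 1 ×ˢ Set.Ico (0:ℝ) Z) (0, ζb) :=
      hucont _ ⟨⟨le_rfl, zero_le_one⟩, hζb⟩
    have htenv : Tendsto v (𝓝[Set.Ioc (0:ℝ) 1] 0) (𝓝 (v 0)) :=
      hv0.tendsto.mono_left (nhdsWithin_mono _ Set.Ioc_subset_Icc_self)
    have htenu : Tendsto (fun ρ' => u ρ' ζb) (𝓝[Set.Ioc (0:ℝ) 1] 0) (𝓝 (u 0 ζb)) := by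
      have hmap : Set.MapsTo (fun ρ' : ℝ => ((ρ', ζb) : ℝ × ℝ)) (Set.Ioc (0:ℝ) 1)
          (Set.Icc (0:ℝ) 1 ×ˢ Set.Ico (0:ℝ) Z) := fun r hr => ⟨⟨hr.1.le, hr.2⟩, hζb⟩
      have hpt : Tendsto (fun ρ' : ℝ => ((ρ', ζb) : ℝ × ℝ)) (𝓝[Set.Ioc (0:ℝ) 1] 0)
          (𝓝[Set.Icc (0:ℝ) 1 ×ˢ Set.Ico (0:ℝ) Z] (0, ζb)) := by
        apply tendsto_nhdsWithin_of_tendsto_nhds_of_eventually_within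
        · exact ((continuous_id.prodMk continuous_const).tendsto 0).mono_left nhdsWithin_le_nhds
        · filter_upwards [self_mem_nhdsWithin] with r hr
          exact hmap hr
      exact hu0.tendsto.comp hpt
    have hle : u 0 ζb - v 0 ≤ 0 := by
      refine le_of_tendsto (htenu.sub htenv) ?_
      filter_upwards [self_mem_nhdsWithin] with r hr
      have := key r hr ζb ⟨hζb.1, hζbζ₁⟩
      linarith
    rw [← h0]
    linarith
  · exact key ρb ⟨h0, hρb.2⟩ ζb ⟨hζb.1, hζbζ₁⟩
end

section
/- The function g(a) = a²/(2 cosh²(a/2)) for a > 0 attains a maximum; at any interior critical point a₀, tanh(a₀/2) = 2/a₀, and g has exactly one critical point on (0,∞). -/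
open Real Set

noncomputable def hfun : ℝ → ℝ := fun a => a * Real.sinh (a/2) - 2 * Real.cosh (a/2)

lemma hfun_hasDeriv (a : ℝ) : HasDerivAt hfun (a * Real.cosh (a/2) / 2) a := by
  have hhalf : HasDerivAt (fun x : ℝ => x / 2) (1/2) a := (hasDerivAt_id a).div_const 2
  have hs : HasDerivAt (fun x : ℝ => Real.sinh (x/2)) (Real.cosh (a/2) * (1/2)) a :=
    by have := (Real.hasDerivAt_sinh (a/2)).comp a hhalf; exact this
  have hc : HasDerivAt (fun x : ℝ => Real.cosh (x/2)) (Real.sinh (a/2) * (1/2)) a :=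
    by have := (Real.hasDerivAt_cosh (a/2)).comp a hhalf; exact this
  have := ((hasDerivAt_id a).mul hs).sub (hc.const_mul 2)
  refine this.congr_deriv ?_
  simp only [id_eq]
  ring

lemma cosh_half_pos (a : ℝ) : 0 < Real.cosh (a/2) := Real.cosh_pos _

lemma g_hasDeriv (a : ℝ) :
    HasDerivAt (fun a : ℝ => a ^ 2 / (2 * Real.cosh (a / 2) ^ 2))
      (-a * hfun a / (2 * Real.cosh (a/2) ^ 3)) a := by
  have hhalf : HasDerivAt (fun x : ℝ => x / 2) (1/2) a := (hasDerivAt_id a).div_const 2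
  have hc : HasDerivAt (fun x : ℝ => Real.cosh (x/2)) (Real.sinh (a/2) * (1/2)) a :=
    by have := (Real.hasDerivAt_cosh (a/2)).comp a hhalf; exact this
  have hv : HasDerivAt (fun x : ℝ => 2 * Real.cosh (x/2) ^ 2)
      (2 * ((2 : ℕ) * Real.cosh (a/2) ^ 1 * (Real.sinh (a/2) * (1/2)))) a :=
    (hc.pow 2).const_mul 2
  have hu : HasDerivAt (fun x : ℝ => x ^ 2) ((2:ℕ) * a ^ 1) a := hasDerivAt_pow 2 a
  have hvne : (2 : ℝ) * Real.cosh (a/2) ^ 2 ≠ 0 := by positivity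
  have := hu.div hv hvne
  refine this.congr_deriv ?_
  have hcne : Real.cosh (a/2) ≠ 0 := (cosh_half_pos a).ne'
  simp only [hfun]
  field_simp
  ring

lemma hfun_strictMono : StrictMonoOn hfun (Set.Ici 0) := by
  apply strictMonoOn_of_deriv_pos (convex_Ici 0)
    (fun a _ => (hfun_hasDeriv a).continuousAt.continuousWithinAt)
  intro a ha
  rw [interior_Ici] at ha
  rw [(hfun_hasDeriv a).deriv]
  have := cosh_half_pos a
  have : (0:ℝ) < a := ha
  positivity

lemma hfun_zero : hfun 0 = -2 := by simp [hfun]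

lemma hfun_four_pos : 0 < hfun 4 := by
  have h4 : (4:ℝ)/2 = 2 := by norm_num
  rw [hfun, h4]
  rw [Real.sinh_eq, Real.cosh_eq]
  have h1 : Real.exp 4 ≥ 5 := by
    have := Real.add_one_le_exp (4:ℝ)
    linarith
  have h2 : Real.exp (-2:ℝ) * Real.exp 2 = 1 := by rw [← Real.exp_add]; norm_num
  have h3 : Real.exp 2 > 0 := Real.exp_pos 2
  have h5 : Real.exp 2 * Real.exp 2 = Real.exp 4 := by
    rw [← Real.exp_add]; norm_num
  nlinarith [Real.exp_pos (-2:ℝ), mul_pos h3 h3]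

/-- The function `g(a) = a²/(2cosh²(a/2))` attains a maximum on `(0,∞)`; at any
interior critical point `a₀` we have `tanh(a₀/2) = 2/a₀`, and `g` has exactly one
critical point on `(0,∞)`. -/
theorem stmt_11 (g : ℝ → ℝ)
    (hg : ∀ a : ℝ, g a = a ^ 2 / (2 * Real.cosh (a / 2) ^ 2)) :
    (∃ a ∈ Set.Ioi (0:ℝ), IsMaxOn g (Set.Ioi 0) a) ∧
    (∀ a ∈ Set.Ioi (0:ℝ), deriv g a = 0 → Real.tanh (a / 2) = 2 / a) ∧
    (∃! a : ℝ, a ∈ Set.Ioi (0:ℝ) ∧ deriv g a = 0) := by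
  have hgeq : g = fun a : ℝ => a ^ 2 / (2 * Real.cosh (a / 2) ^ 2) := funext hg
  subst hgeq
  -- deriv formula
  have hderiv : ∀ a : ℝ, deriv (fun a : ℝ => a ^ 2 / (2 * Real.cosh (a / 2) ^ 2)) a
      = -a * hfun a / (2 * Real.cosh (a/2) ^ 3) := fun a => (g_hasDeriv a).deriv
  -- existence of root of hfun
  have hcont : ContinuousOn hfun (Set.Icc 0 4) :=
    fun a _ => (hfun_hasDeriv a).continuousAt.continuousWithinAt
  have hiv : ∃ a₀ ∈ Set.Ioo (0:ℝ) 4, hfun a₀ = 0 := by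
    have := intermediate_value_Ioo (by norm_num : (0:ℝ) ≤ 4) hcont
    have hmem : (0:ℝ) ∈ Set.Ioo (hfun 0) (hfun 4) := by
      rw [hfun_zero]; exact ⟨by norm_num, hfun_four_pos⟩
    exact this hmem
  obtain ⟨a₀, ha₀mem, ha₀⟩ := hiv
  have ha₀pos : (0:ℝ) < a₀ := ha₀mem.1
  -- sign of hfun
  have hsign_neg : ∀ a, 0 < a → a < a₀ → hfun a < 0 := by
    intro a ha hlt
    have := hfun_strictMono (le_of_lt ha) (le_of_lt ha₀pos) hlt
    linarith [ha₀ ▸ this]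
  have hsign_pos : ∀ a, a₀ < a → 0 < hfun a := by
    intro a hlt
    have := hfun_strictMono (le_of_lt ha₀pos) (le_of_lt (ha₀pos.trans hlt)) hlt
    linarith [ha₀ ▸ this]
  have hcosh3 : ∀ a : ℝ, (0:ℝ) < 2 * Real.cosh (a/2) ^ 3 := by
    intro a; have := cosh_half_pos a; positivity
  refine ⟨⟨a₀, ha₀pos, ?_⟩, ?_, ?_⟩
  · -- max
    have mono : MonotoneOn (fun a : ℝ => a ^ 2 / (2 * Real.cosh (a / 2) ^ 2)) (Set.Icc 0 a₀) := by
      apply monotoneOn_of_deriv_nonneg (convex_Icc 0 a₀)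
        (fun a _ => (g_hasDeriv a).continuousAt.continuousWithinAt)
        (fun a _ => (g_hasDeriv a).differentiableAt.differentiableWithinAt)
      intro a ha
      rw [interior_Icc] at ha
      rw [hderiv a]
      have h1 := hsign_neg a ha.1 ha.2
      have h2 := hcosh3 a
      have : 0 ≤ -a * hfun a := by nlinarith [ha.1]
      positivity
    have anti : AntitoneOn (fun a : ℝ => a ^ 2 / (2 * Real.cosh (a / 2) ^ 2)) (Set.Ici a₀) := by
      apply antitoneOn_of_deriv_nonpos (convex_Ici a₀)
        (fun a _ => (g_hasDeriv a).continuousAt.continuousWithinAt)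
        (fun a _ => (g_hasDeriv a).differentiableAt.differentiableWithinAt)
      intro a ha
      rw [interior_Ici] at ha
      rw [hderiv a]
      have h1 := hsign_pos a ha
      have h2 := hcosh3 a
      have hapos : 0 < a := ha₀pos.trans ha
      have : -a * hfun a ≤ 0 := by nlinarith
      exact div_nonpos_of_nonpos_of_nonneg this (le_of_lt h2)
    intro x hx
    simp only [Set.mem_Ioi] at hx
    rcases le_total x a₀ with h | h
    · exact mono ⟨le_of_lt hx, h⟩ ⟨le_refl 0 |>.trans (le_of_lt ha₀pos), le_refl a₀⟩ h
    · exact anti (Set.self_mem_Ici) h h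
  · -- critical point equation
    intro a ha hda
    simp only [Set.mem_Ioi] at ha
    rw [hderiv a] at hda
    have h2 := hcosh3 a
    have hnum : -a * hfun a = 0 := by
      rcases div_eq_zero_iff.mp hda with h | h
      · exact h
      · exact absurd h h2.ne'
    have hh : hfun a = 0 := by
      rcases mul_eq_zero.mp hnum with h | h
      · exact absurd (neg_eq_zero.mp h) ha.ne'
      · exact h
    have := hh
    rw [hfun] at this
    have hcne : Real.cosh (a/2) ≠ 0 := (cosh_half_pos a).ne'
    rw [Real.tanh_eq_sinh_div_cosh]
    field_simp
    linarith
  · -- unique critical point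
    refine ⟨a₀, ⟨ha₀pos, ?_⟩, ?_⟩
    · rw [hderiv a₀, ha₀]; ring
    · rintro b ⟨hb, hdb⟩
      simp only [Set.mem_Ioi] at hb
      rw [hderiv b] at hdb
      have h2 := hcosh3 b
      have hnum : -b * hfun b = 0 := by
        rcases div_eq_zero_iff.mp hdb with h | h
        · exact h
        · exact absurd h h2.ne'
      have hh : hfun b = 0 := by
        rcases mul_eq_zero.mp hnum with h | h
        · exact absurd (neg_eq_zero.mp h) hb.ne'
        · exact h
      exact hfun_strictMono.injOn (le_of_lt hb) (le_of_lt ha₀pos) (by rw [hh, ha₀])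
end

section
/- If u(ρ,ζ) is a classical solution of (1−ρ²)∂_ζu = (1/ρ)∂_ρ(ρ∂_ρu) + λ²e^u with u(ρ,0)=0, u(1,ζ)=0 and zero-flux at the axis, and if u is C¹ in ζ, then ∂_ζ u ≥ 0; i.e., the temperature is nondecreasing along the pipe. (Sketch: w = ∂_ζu satisfies the linear equation (1−ρ²)∂_ζw = (1/ρ)∂_ρ(ρ∂_ρw) + λ²e^u w with w(ρ,0) = λ²/(1−ρ²) > 0 for ρ<1 and w(1,ζ)=0, and the maximum principle applies.) -/
open Real Set Filter

open Real Set Filter Topology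

lemma deriv_nonpos_of_left_min {f : ℝ → ℝ} {d x a : ℝ} (hax : a < x)
    (hd : HasDerivAt f d x) (hmin : ∀ t ∈ Set.Icc a x, f x ≤ f t) : d ≤ 0 := by
  have hs : Tendsto (slope f x) (𝓝[<] x) (𝓝 d) :=
    (hasDerivAt_iff_tendsto_slope.1 hd).mono_left
      (nhdsWithin_mono _ (fun t ht => ne_of_lt ht))
  refine le_of_tendsto hs ?_
  filter_upwards [Ioo_mem_nhdsLT_of_mem (show x ∈ Set.Ioc a x from ⟨hax, le_rfl⟩)] with t ht
  have h1 : f x ≤ f t := hmin t ⟨ht.1.le, ht.2.le⟩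
  have h2 : t - x < 0 := by linarith [ht.2]
  rw [slope_def_field]
  exact div_nonpos_of_nonneg_of_nonpos (sub_nonneg.2 h1) h2.le

lemma deriv_nonneg_of_right_min {f : ℝ → ℝ} {d x b : ℝ} (hxb : x < b)
    (hd : HasDerivAt f d x) (hmin : ∀ t ∈ Set.Ico x b, f x ≤ f t) : 0 ≤ d := by
  have hs : Tendsto (slope f x) (𝓝[>] x) (𝓝 d) :=
    (hasDerivAt_iff_tendsto_slope.1 hd).mono_left
      (nhdsWithin_mono _ (fun t ht => ne_of_gt ht))
  refine ge_of_tendsto hs ?_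
  filter_upwards [Ioo_mem_nhdsGT_of_mem (show x ∈ Set.Ico x b from ⟨le_rfl, hxb⟩)] with t ht
  have h1 : f x ≤ f t := hmin t ⟨ht.1.le, ht.2⟩
  have h2 : 0 < t - x := by linarith [ht.1]
  rw [slope_def_field]
  exact div_nonneg (sub_nonneg.2 h1) h2.le

lemma W_nonneg_of_interior_min {f f' : ℝ → ℝ} {x W a b : ℝ}
    (ha : 0 < a) (hax : a < x) (hxb : x < b)
    (hf : ∀ r ∈ Set.Ioo a b, HasDerivAt f (f' r) r)
    (hq : HasDerivAt (fun r => r * f' r) W x)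
    (hmin : ∀ r ∈ Set.Icc a b, f x ≤ f r) : 0 ≤ W := by
  have hx : x ∈ Set.Ioo a b := ⟨hax, hxb⟩
  have hloc : IsLocalMin f x := by
    have : Set.Icc a b ∈ 𝓝 x := Icc_mem_nhds hax hxb
    exact Filter.eventually_of_mem this hmin
  have hfx0 : f' x = 0 := hloc.hasDerivAt_eq_zero (hf x hx)
  by_contra hW
  push_neg at hW
  have hs : Tendsto (slope (fun r => r * f' r) x) (𝓝[>] x) (𝓝 W) :=
    (hasDerivAt_iff_tendsto_slope.1 hq).mono_left
      (nhdsWithin_mono _ (fun t ht => ne_of_gt ht))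
  have hev : ∀ᶠ t in 𝓝[>] x, slope (fun r => r * f' r) x t < 0 :=
    hs.eventually_lt_const hW
  obtain ⟨u, hu, huq⟩ := mem_nhdsGT_iff_exists_Ioo_subset.1 hev
  set y : ℝ := min ((x + b) / 2) ((x + u) / 2) with hy
  have hxy : x < y := lt_min (by linarith) (by simp only [Set.mem_Ioi] at hu; linarith)
  have hyb : y < b := lt_of_le_of_lt (min_le_left _ _) (by linarith)
  have hyu : y < u := lt_of_le_of_lt (min_le_right _ _) (by simp only [Set.mem_Ioi] at hu; linarith)
  have hneg : ∀ t ∈ Set.Ioo x y, f' t < 0 := by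
    intro t ht
    have hqt : slope (fun r => r * f' r) x t < 0 := huq ⟨ht.1, lt_trans ht.2 hyu⟩
    rw [slope_def_field] at hqt
    have htx : 0 < t - x := by linarith [ht.1]
    have : t * f' t - x * f' x < 0 := by
      by_contra hcon
      push_neg at hcon
      exact absurd hqt (not_lt.2 (div_nonneg hcon htx.le))
    rw [hfx0] at this
    have htp : 0 < t := lt_trans (lt_trans ha hax) ht.1
    nlinarith
  have hcont : ContinuousOn f (Set.Icc x y) := by
    intro t ht
    exact ((hf t ⟨lt_of_lt_of_le hax ht.1, lt_of_le_of_lt ht.2 hyb⟩).continuousAt).continuousWithinAt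
  have hderiv : ∀ t ∈ Set.Ioo x y, HasDerivAt f (f' t) t :=
    fun t ht => hf t ⟨lt_trans hax ht.1, lt_trans ht.2 hyb⟩
  obtain ⟨c, hc, hslope⟩ := exists_hasDerivAt_eq_slope f f' hxy hcont hderiv
  have : f y < f x := by
    have h1 : f' c < 0 := hneg c hc
    have h2 : (f y - f x) / (y - x) < 0 := hslope ▸ h1
    have h3 : 0 < y - x := by linarith
    have := (div_neg_iff).1 h2
    rcases this with ⟨h4,h5⟩ | ⟨h4,h5⟩
    · linarith
    · linarith
  exact absurd (hmin y ⟨le_of_lt (lt_trans hax hxy), hyb.le⟩) (not_le.2 this)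

set_option maxHeartbeats 1000000 in
/-- Parabolic weak minimum principle for the degenerate radial operator. -/
lemma minprin (Z' C : ℝ) (hZ' : 0 < Z') (hC : 1 ≤ C)
    (v vζ vρ wv c : ℝ → ℝ → ℝ)
    (hvcont : ContinuousOn (fun p : ℝ × ℝ => v p.1 p.2)
      (Set.Icc (0:ℝ) 1 ×ˢ Set.Icc (0:ℝ) Z'))
    (hvζ : ∀ ρ ∈ Set.Ioo (0:ℝ) 1, ∀ ζ ∈ Set.Ioc (0:ℝ) Z',
      HasDerivAt (fun t => v ρ t) (vζ ρ ζ) ζ)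
    (hvρ : ∀ ρ ∈ Set.Ioo (0:ℝ) 1, ∀ ζ ∈ Set.Ioc (0:ℝ) Z',
      HasDerivAt (fun r => v r ζ) (vρ ρ ζ) ρ)
    (hwv : ∀ ρ ∈ Set.Ioo (0:ℝ) 1, ∀ ζ ∈ Set.Ioc (0:ℝ) Z',
      HasDerivAt (fun r => r * vρ r ζ) (wv ρ ζ) ρ)
    (hineq : ∀ ρ ∈ Set.Ioo (0:ℝ) 1, ∀ ζ ∈ Set.Ioc (0:ℝ) Z',
      (1/ρ) * wv ρ ζ + c ρ ζ * v ρ ζ ≤ (1 - ρ^2) * vζ ρ ζ)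
    (hc0 : ∀ ρ ∈ Set.Ioo (0:ℝ) 1, ∀ ζ ∈ Set.Ioc (0:ℝ) Z', 0 ≤ c ρ ζ)
    (hcC : ∀ ρ ∈ Set.Ioo (0:ℝ) 1, ∀ ζ ∈ Set.Ioc (0:ℝ) Z', c ρ ζ ≤ C)
    (hv0 : ∀ ρ ∈ Set.Icc (0:ℝ) 1, 0 ≤ v ρ 0)
    (hv1 : ∀ ζ ∈ Set.Icc (0:ℝ) Z', 0 ≤ v 1 ζ) :
    ∀ ρ ∈ Set.Icc (0:ℝ) 1, ∀ ζ ∈ Set.Icc (0:ℝ) Z', 0 ≤ v ρ ζ := by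
  have hCpos : (0:ℝ) < C := lt_of_lt_of_le zero_lt_one hC
  -- the radial weight
  set φ : ℝ → ℝ := fun x => 1 + C * (1 - x^2) with hφdef
  have hφpos : ∀ x : ℝ, x ∈ Set.Icc (0:ℝ) 1 → (1:ℝ) ≤ φ x := by
    intro x hx
    have : x^2 ≤ 1 := by nlinarith [hx.1, hx.2]
    simp only [hφdef]; nlinarith
  have hφub : ∀ x : ℝ, x ∈ Set.Icc (0:ℝ) 1 → φ x ≤ 1 + C := by
    intro x hx; simp only [hφdef]; nlinarith [sq_nonneg x]
  have hφd : ∀ x : ℝ, HasDerivAt φ (-(2*C*x)) x := by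
    intro x
    have h1 : HasDerivAt (fun y : ℝ => 1 + C * (1 - y^2)) (C * (0 - 2*x)) x := by
      have h2 : HasDerivAt (fun y : ℝ => y^2) (2*x) x := by
        simpa using hasDerivAt_pow 2 x
      have h3 : HasDerivAt (fun y : ℝ => 1 - y^2) (0 - 2*x) x := (hasDerivAt_const x 1).sub h2
      exact (h3.const_mul C).const_add 1
    convert h1 using 1; ring
  -- global bound for v
  obtain ⟨M0, hM0⟩ := (isCompact_Icc.prod isCompact_Icc).exists_bound_of_continuousOn hvcont
  set M : ℝ := max M0 0 with hMdef
  have hM : ∀ p : ℝ × ℝ, p ∈ Set.Icc (0:ℝ) 1 ×ˢ Set.Icc (0:ℝ) Z' → |v p.1 p.2| ≤ M := by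
    intro p hp
    exact le_trans (by simpa using hM0 p hp) (le_max_left _ _)
  have hMnonneg : 0 ≤ M := le_max_right _ _
  -- main δ-claim
  have key : ∀ δ : ℝ, 0 < δ → ∀ ρ ∈ Set.Ioc (0:ℝ) 1, ∀ ζ ∈ Set.Icc (0:ℝ) Z',
      -(2*δ) ≤ v ρ ζ * (Real.exp (-(C^2*ζ)) * (φ ρ)⁻¹) - δ * Real.log ρ := by
    intro δ hδ
    set a : ℝ := min (1/2) (Real.exp (-((M+1)/δ))) with hadef
    have ha0 : 0 < a := lt_min (by norm_num) (Real.exp_pos _)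
    have ha12 : a ≤ 1/2 := min_le_left _ _
    have halt1 : a < 1 := by linarith
    have hloga : Real.log a ≤ -((M+1)/δ) := by
      calc Real.log a ≤ Real.log (Real.exp (-((M+1)/δ))) :=
            Real.log_le_log ha0 (min_le_right _ _)
        _ = -((M+1)/δ) := Real.log_exp _
    -- axis region estimate
    have axisA : ∀ ρ : ℝ, 0 < ρ → ρ ≤ a → ∀ ζ ∈ Set.Icc (0:ℝ) Z',
        1 ≤ v ρ ζ * (Real.exp (-(C^2*ζ)) * (φ ρ)⁻¹) - δ * Real.log ρ := by
      intro ρ hρ0 hρa ζ hζ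
      have hρ1 : ρ ≤ 1 := le_trans hρa (by linarith)
      have hφ1 : 1 ≤ φ ρ := hφpos ρ ⟨hρ0.le, hρ1⟩
      have hE1 : Real.exp (-(C^2*ζ)) ≤ 1 := by
        rw [Real.exp_le_one_iff]
        nlinarith [sq_nonneg C, hζ.1]
      have hBpos : 0 < Real.exp (-(C^2*ζ)) * (φ ρ)⁻¹ :=
        mul_pos (Real.exp_pos _) (inv_pos.2 (by linarith))
      have hB1 : Real.exp (-(C^2*ζ)) * (φ ρ)⁻¹ ≤ 1 := by
        have h1 : (φ ρ)⁻¹ ≤ 1 := inv_le_one_of_one_le₀ hφ1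
        have h2 : 0 ≤ (φ ρ)⁻¹ := le_of_lt (inv_pos.2 (by linarith))
        nlinarith [Real.exp_pos (-(C^2*ζ))]
      have hvM : -M ≤ v ρ ζ := by
        have := hM (ρ, ζ) ⟨⟨hρ0.le, hρ1⟩, hζ⟩
        simp only at this
        linarith [(abs_le.1 this).1]
      have h1 : -M ≤ v ρ ζ * (Real.exp (-(C^2*ζ)) * (φ ρ)⁻¹) := by
        rcases le_or_gt 0 (v ρ ζ) with h | h
        · nlinarith
        · nlinarith [mul_nonneg (le_of_lt (neg_pos.2 h)) (sub_nonneg.2 hB1)]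
      have hlogρ : Real.log ρ ≤ Real.log a := Real.log_le_log hρ0 hρa
      have h4 : δ * (-((M+1)/δ)) = -(M+1) := by field_simp
      have h2 : M + 1 ≤ -(δ * Real.log ρ) := by
        have h3 := mul_le_mul_of_nonneg_left hloga hδ.le
        have h5 := mul_le_mul_of_nonneg_left hlogρ hδ.le
        linarith
      linarith
    -- compact-minimum argument on [a,1] × [0,Z']
    have hφcont : Continuous φ := by
      rw [hφdef]
      exact continuous_const.add (continuous_const.mul (continuous_const.sub (continuous_pow 2)))
    set Gf : ℝ × ℝ → ℝ := fun p =>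
      v p.1 p.2 * (Real.exp (-(C^2*p.2)) * (φ p.1)⁻¹) - δ * Real.log p.1 with hGfdef
    set Ka : Set (ℝ × ℝ) := Set.Icc a 1 ×ˢ Set.Icc (0:ℝ) Z' with hKadef
    have hsub : Ka ⊆ Set.Icc (0:ℝ) 1 ×ˢ Set.Icc (0:ℝ) Z' := by
      intro p hp
      exact ⟨⟨le_trans ha0.le hp.1.1, hp.1.2⟩, hp.2⟩
    have hGcont : ContinuousOn Gf Ka := by
      have hvK : ContinuousOn (fun p : ℝ × ℝ => v p.1 p.2) Ka := hvcont.mono hsub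
      have hexp : Continuous fun p : ℝ × ℝ => Real.exp (-(C^2*p.2)) :=
        Real.continuous_exp.comp (continuous_const.mul continuous_snd).neg
      have hφK : ContinuousOn (fun p : ℝ × ℝ => (φ p.1)⁻¹) Ka := by
        apply ContinuousOn.inv₀ (hφcont.comp continuous_fst).continuousOn
        intro p hp hzero
        have h1 : (1:ℝ) ≤ φ p.1 := hφpos p.1 ⟨le_trans ha0.le hp.1.1, hp.1.2⟩
        simp only [Function.comp_apply] at hzero
        rw [hzero] at h1; linarith
      have hlogK : ContinuousOn (fun p : ℝ × ℝ => Real.log p.1) Ka := by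
        apply ContinuousOn.comp Real.continuousOn_log continuous_fst.continuousOn
        intro p hp
        simp only [Set.mem_compl_iff, Set.mem_singleton_iff]
        exact ne_of_gt (lt_of_lt_of_le ha0 hp.1.1)
      exact (hvK.mul (hexp.continuousOn.mul hφK)).sub (hlogK.const_smul δ)
    have hKacpt : IsCompact Ka := isCompact_Icc.prod isCompact_Icc
    have hKane : Ka.Nonempty := ⟨(a, 0), ⟨⟨le_rfl, halt1.le⟩, ⟨le_rfl, hZ'.le⟩⟩⟩
    obtain ⟨p, hpKa, hpminOn⟩ := hKacpt.exists_isMinOn hKane hGcont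
    have hpmin : ∀ q ∈ Ka, Gf p ≤ Gf q := fun q hq => hpminOn hq
    obtain ⟨r, ζs⟩ := p
    have hra' : a ≤ r := hpKa.1.1
    have hr1' : r ≤ 1 := hpKa.1.2
    have hζs0 : 0 ≤ ζs := hpKa.2.1
    have hζsZ : ζs ≤ Z' := hpKa.2.2
    have hr0 : 0 < r := lt_of_lt_of_le ha0 hra'
    have hGoal : -(2*δ) ≤ Gf (r, ζs) := by
      by_contra hcon
      push_neg at hcon
      have hmneg : Gf (r, ζs) < 0 := by linarith
      have hlogr : Real.log r ≤ 0 := Real.log_nonpos hr0.le hr1'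
      -- exclude boundary positions
      have hφrpos : (0:ℝ) < φ r := lt_of_lt_of_le one_pos (hφpos r ⟨hr0.le, hr1'⟩)
      have hEpos : (0:ℝ) < Real.exp (-(C^2*ζs)) := Real.exp_pos _
      have hr1 : r < 1 := by
        rcases lt_or_eq_of_le hr1' with h | h
        · exact h
        · exfalso
          have hv1' : 0 ≤ v 1 ζs := hv1 ζs ⟨hζs0, hζsZ⟩
          have : Gf (r, ζs) = v 1 ζs * (Real.exp (-(C^2*ζs)) * (φ 1)⁻¹) := by
            rw [hGfdef]; simp [h, Real.log_one]
          rw [this] at hmneg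
          have hφ1pos : (0:ℝ) < φ 1 := lt_of_lt_of_le one_pos (hφpos 1 ⟨zero_le_one, le_rfl⟩)
          nlinarith only [mul_pos hEpos (inv_pos.2 hφ1pos), hmneg, hv1',
            mul_nonneg hv1' (le_of_lt (mul_pos hEpos (inv_pos.2 hφ1pos)))]
      have hra : a < r := by
        rcases lt_or_eq_of_le hra' with h | h
        · exact h
        · exfalso
          have := axisA r hr0 (le_of_eq h.symm) ζs ⟨hζs0, hζsZ⟩
          have h1 : (1:ℝ) ≤ Gf (r, ζs) := by
            show (1:ℝ) ≤ v r ζs * (Real.exp (-(C^2*ζs)) * (φ r)⁻¹) - δ * Real.log r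
            exact this
          linarith
      have hζs0' : 0 < ζs := by
        rcases lt_or_eq_of_le hζs0 with h | h
        · exact h
        · exfalso
          have hv0' : 0 ≤ v r 0 := hv0 r ⟨hr0.le, hr1'⟩
          have heq : Gf (r, ζs) = v r 0 * (Real.exp (-(C^2*(0:ℝ))) * (φ r)⁻¹) - δ * Real.log r := by
            show v r ζs * (Real.exp (-(C^2*ζs)) * (φ r)⁻¹) - δ * Real.log r = _
            rw [← h]
          rw [heq] at hmneg
          nlinarith only [hmneg, hδ, hlogr,
            mul_nonneg hv0' (le_of_lt (mul_pos (Real.exp_pos (-(C^2*(0:ℝ)))) (inv_pos.2 hφrpos))),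
            mul_nonneg hδ.le (neg_nonneg.2 hlogr)]
      have hrIoo : r ∈ Set.Ioo (0:ℝ) 1 := ⟨hr0, hr1⟩
      have hζIoc : ζs ∈ Set.Ioc (0:ℝ) Z' := ⟨hζs0', hζsZ⟩
      set E : ℝ := Real.exp (-(C^2*ζs)) with hEdef
      set F : ℝ := φ r with hFdef2
      have hFpos : (0:ℝ) < F := hφrpos
      have hF1 : (1:ℝ) ≤ F := hφpos r ⟨hr0.le, hr1'⟩
      have hFne : F ≠ 0 := ne_of_gt hFpos
      have hEne : E ≠ 0 := ne_of_gt hEpos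
      set V : ℝ := v r ζs with hVdef
      set P : ℝ := vρ r ζs with hPdef
      set Wv : ℝ := wv r ζs with hWvdef
      set Dz : ℝ := vζ r ζs with hDzdef
      set cc : ℝ := c r ζs with hccdef
      have hccC : cc ≤ C := hcC r hrIoo ζs hζIoc
      have hcc0 : 0 ≤ cc := hc0 r hrIoo ζs hζIoc
      -- ζ-direction at the minimum
      have h3' : Dz ≤ C^2 * V := by
        have hlin : HasDerivAt (fun t : ℝ => -(C^2*t)) (-(C^2)) ζs := by
          exact ((hasDerivAt_id ζs).const_mul (C^2)).neg.congr_deriv (by simp)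
        have hexp3 : HasDerivAt (fun t : ℝ => Real.exp (-(C^2*t))) (E * (-(C^2))) ζs := by
          simpa [hEdef] using hlin.exp
        have hd3 : HasDerivAt (fun t => v r t * (Real.exp (-(C^2*t)) * (φ r)⁻¹))
            (Dz * (E * F⁻¹) + V * ((E * (-(C^2))) * F⁻¹)) ζs :=
          (hvζ r hrIoo ζs hζIoc).mul (hexp3.mul_const _)
        have hd3' : HasDerivAt (fun t => v r t * (Real.exp (-(C^2*t)) * (φ r)⁻¹)
            - δ * Real.log r) (Dz * (E * F⁻¹) + V * ((E * (-(C^2))) * F⁻¹)) ζs :=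
          hd3.sub_const _
        have hmin3 : ∀ t ∈ Set.Icc 0 ζs,
            (fun t => v r t * (Real.exp (-(C^2*t)) * (φ r)⁻¹) - δ * Real.log r) ζs ≤
            (fun t => v r t * (Real.exp (-(C^2*t)) * (φ r)⁻¹) - δ * Real.log r) t := by
          intro t ht
          exact hpmin (r, t) ⟨⟨hra', hr1'⟩, ⟨ht.1, le_trans ht.2 hζsZ⟩⟩
        have hd3le := deriv_nonpos_of_left_min hζs0' hd3' hmin3
        by_contra hcontra
        push_neg at hcontra
        have hpos : 0 < E * F⁻¹ := mul_pos hEpos (inv_pos.2 hFpos)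
        nlinarith only [hd3le, mul_pos hpos (sub_pos.2 hcontra)]
      -- radial direction at the minimum
      set f4 : ℝ → ℝ := fun y => v y ζs * (E * (φ y)⁻¹) - δ * Real.log y with hf4def
      set f4' : ℝ → ℝ := fun y =>
        vρ y ζs * (E * (φ y)⁻¹) + v y ζs * (E * (2*C*y) * ((φ y)^2)⁻¹) - δ * y⁻¹ with hf4'def
      have hf4 : ∀ y ∈ Set.Ioo (0:ℝ) 1, HasDerivAt f4 (f4' y) y := by
        intro y hy
        have hφy : (0:ℝ) < φ y := lt_of_lt_of_le one_pos (hφpos y ⟨hy.1.le, le_of_lt hy.2⟩)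
        have hinv : HasDerivAt (fun z => (φ z)⁻¹) (2*C*y * ((φ y)^2)⁻¹) y := by
          have h := (hφd y).inv (ne_of_gt hφy)
          refine h.congr_deriv ?_
          field_simp
        have hw1 : HasDerivAt (fun z => E * (φ z)⁻¹) (E * (2*C*y) * ((φ y)^2)⁻¹) y := by
          have h := hinv.const_mul E
          refine h.congr_deriv ?_
          ring
        have hlog := Real.hasDerivAt_log (ne_of_gt hy.1)
        have h := ((hvρ y hy ζs hζIoc).mul hw1).sub (hlog.const_mul δ)
        rw [hf4def, hf4'def]
        exact h
      have hminIoo : ∀ y ∈ Set.Icc a 1, f4 r ≤ f4 y := by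
        intro y hy
        exact hpmin (y, ζs) ⟨hy, ⟨hζs0, hζsZ⟩⟩
      -- f4' r = 0
      have hlocmin : IsLocalMin f4 r :=
        Filter.eventually_of_mem (Icc_mem_nhds hra hr1) hminIoo
      have hf40 : f4' r = 0 := hlocmin.hasDerivAt_eq_zero (hf4 r hrIoo)
      -- second order information
      have hsq : HasDerivAt (fun y => ((φ y)^2)⁻¹)
          (-(2 * φ r ^ 1 * -(2*C*r)) * (((φ r)^2)^2)⁻¹) r := by
        have h1 := ((hφd r).pow 2).inv (pow_ne_zero 2 hFne)
        refine h1.congr_deriv ?_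
        simp only [Pi.pow_apply]
        ring
      have hy2 : HasDerivAt (fun y : ℝ => y^2) (2*r) r := by simpa using hasDerivAt_pow 2 r
      have hg : HasDerivAt (fun y => (E * (2*C)) * (y^2 * ((φ y)^2)⁻¹))
          ((E * (2*C)) * (2*r * ((φ r)^2)⁻¹ +
            r^2 * (-(2 * φ r ^ 1 * -(2*C*r)) * (((φ r)^2)^2)⁻¹))) r :=
        (hy2.mul hsq).const_mul (E * (2*C))
      have hw1r : HasDerivAt (fun z => E * (φ z)⁻¹) (E * (2*C*r) * ((φ r)^2)⁻¹) r := by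
        have hinv : HasDerivAt (fun z => (φ z)⁻¹) (2*C*r * ((φ r)^2)⁻¹) r := by
          have h := (hφd r).inv hFne
          refine h.congr_deriv ?_
          field_simp
        have h := hinv.const_mul E
        refine h.congr_deriv ?_
        ring
      set Wx : ℝ := Wv * (E * F⁻¹) + (r * P) * (E * (2*C*r) * (F^2)⁻¹) +
        (P * ((E * (2*C)) * (r^2 * (F^2)⁻¹)) +
         V * ((E * (2*C)) * (2*r * (F^2)⁻¹ + r^2 * (-(2 * F ^ 1 * -(2*C*r)) * ((F^2)^2)⁻¹)))) with hWxdef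
      have hqW : HasDerivAt (fun y => (y * vρ y ζs) * (E * (φ y)⁻¹) +
          v y ζs * ((E * (2*C)) * (y^2 * ((φ y)^2)⁻¹)) - δ) Wx r := by
        have h := (((hwv r hrIoo ζs hζIoc).mul hw1r).add
          ((hvρ r hrIoo ζs hζIoc).mul hg)).sub_const δ
        refine h.congr_deriv ?_
        rw [hWxdef]
      have hqW' : HasDerivAt (fun y => y * f4' y) Wx r := by
        apply hqW.congr_of_eventuallyEq
        have hne : ∀ᶠ y in 𝓝 r, y ≠ 0 := eventually_ne_nhds (ne_of_gt hr0)
        filter_upwards [hne] with y hy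
        rw [hf4'def]
        field_simp
      have hW0 : 0 ≤ Wx :=
        W_nonneg_of_interior_min ha0 hra hr1
          (fun y hy => hf4 y ⟨lt_trans ha0 hy.1, hy.2⟩) hqW' hminIoo
      -- turn facts into polynomial identities
      have hf40e : P * (E * F⁻¹) + V * (E * (2*C*r) * (F^2)⁻¹) - δ * r⁻¹ = 0 := by
        have : f4' r = P * (E * F⁻¹) + V * (E * (2*C*r) * (F^2)⁻¹) - δ * r⁻¹ := by
          rw [hf4'def]
        rw [← this]; exact hf40
      have hrne : r ≠ 0 := ne_of_gt hr0
      have hfr0p : P*E*r*F = δ*F^2 - 2*C*r^2*V*E := by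
        have h2 : (P * (E * F⁻¹) + V * (E * (2*C*r) * (F^2)⁻¹) - δ * r⁻¹) * (r * F^2) =
            P*E*r*F + 2*C*r^2*V*E - δ*F^2 := by
          field_simp
        rw [hf40e, zero_mul] at h2
        linarith only [h2]
      have key0 : 0 ≤ Wv * F^2 + 4*C*r^2*P*F + 4*C*r*V*F + 8*C^2*r^3*V := by
        have hWeq : Wx * (F^3 * E⁻¹) =
            Wv * F^2 + 4*C*r^2*P*F + 4*C*r*V*F + 8*C^2*r^3*V := by
          rw [hWxdef]
          field_simp
          ring
        have h := mul_nonneg hW0 (mul_nonneg (pow_nonneg hFpos.le 3) (inv_nonneg.2 hEpos.le))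
        rwa [hWeq] at h
      have key1 : 0 ≤ E*Wv*F^2 + 4*C*r*δ*F^2 + 4*C*r*V*E*F := by
        have h8 : 4*C*r*(P*E*r*F) = 4*C*r*(δ*F^2 - 2*C*r^2*V*E) := by rw [hfr0p]
        have h9 := mul_nonneg hEpos.le key0
        nlinarith only [h8, h9]
      -- use the differential inequality
      have hineqpt : (1/r) * Wv + cc * V ≤ (1 - r^2) * Dz := hineq r hrIoo ζs hζIoc
      have h11 : r * ((1/r) * Wv) = Wv := by field_simp
      have h1r2 : (0:ℝ) < 1 - r^2 := by nlinarith only [hr0, hr1]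
      have h13 : 0 ≤ r * (1 - r^2) := le_of_lt (mul_pos hr0 h1r2)
      have h7' : Wv ≤ r*(1-r^2)*(C^2*V) - r*(cc*V) := by
        have h10 := mul_le_mul_of_nonneg_left hineqpt hr0.le
        have h12 := mul_le_mul_of_nonneg_left h3' h13
        nlinarith only [h10, h11, h12]
      have h14 := mul_le_mul_of_nonneg_left h7'
        (mul_nonneg hEpos.le (sq_nonneg F) : (0:ℝ) ≤ E * F^2)
      have key2 : 0 ≤ E*(r*(1-r^2)*(C^2*V) - r*(cc*V))*F^2 + 4*C*r*δ*F^2 + 4*C*r*V*E*F := by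
        nlinarith only [key1, h14]
      have hfac : E*(r*(1-r^2)*(C^2*V) - r*(cc*V))*F^2 + 4*C*r*δ*F^2 + 4*C*r*V*E*F =
          (V*E*((1-r^2)*C^2*F - cc*F + 4*C) + 4*C*δ*F) * (r*F) := by ring
      have hS : 0 ≤ V*E*((1-r^2)*C^2*F - cc*F + 4*C) + 4*C*δ*F := by
        rw [hfac] at key2
        have hrF : 0 < r*F := mul_pos hr0 hFpos
        exact le_of_mul_le_mul_right
          (by linarith only [key2] :
            0 * (r*F) ≤ (V*E*((1-r^2)*C^2*F - cc*F + 4*C) + 4*C*δ*F) * (r*F)) hrF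
      have hFeq : F = 1 + C*(1 - r^2) := by rw [hFdef2, hφdef]
      have hsnn : (0:ℝ) ≤ 1 + C*(1 - r^2) := by nlinarith only [mul_pos hCpos h1r2]
      have hA : 2*C*F ≤ (1-r^2)*C^2*F - cc*F + 4*C := by
        rw [hFeq]
        nlinarith only [mul_nonneg hCpos.le (sq_nonneg (C*(1-r^2) - 1)),
          mul_nonneg (sub_nonneg.2 hccC) hsnn]
      -- V*E < 0
      have hGfval : Gf (r, ζs) = V * (E * F⁻¹) - δ * Real.log r := rfl
      rw [hGfval] at hcon
      have hdlog : 0 ≤ δ * (-Real.log r) := mul_nonneg hδ.le (neg_nonneg.2 hlogr)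
      have hVEF : V * (E * F⁻¹) < 0 := by linarith only [hcon, hδ, hdlog]
      have hFinv : 0 < F⁻¹ := inv_pos.2 hFpos
      have hVE : V * E ≤ 0 := by
        by_contra hpos0
        push_neg at hpos0
        have h1 := mul_pos hpos0 hFinv
        rw [mul_assoc] at h1
        linarith only [hVEF, h1]
      have hVE2 : -(2*δ) ≤ V*E := by
        by_contra hcn
        push_neg at hcn
        have h1 := mul_le_mul_of_nonpos_right hA hVE
        have h2 := mul_lt_mul_of_pos_left hcn
          (mul_pos (mul_pos two_pos hCpos) hFpos)
        nlinarith only [hS, h1, h2]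
      have hFinv1 : F⁻¹ ≤ 1 := inv_le_one_of_one_le₀ hF1
      have hfinal : V*E ≤ V * (E * F⁻¹) := by
        nlinarith only [mul_nonneg (neg_nonneg.2 hVE) (sub_nonneg.2 hFinv1)]
      linarith only [hcon, hVE2, hfinal, hdlog]
    -- conclude the δ-claim
    intro ρ hρ ζ hζ
    rcases le_or_gt ρ a with h | h
    · have := axisA ρ hρ.1 h ζ hζ
      linarith
    · have hle := hpmin (ρ, ζ) ⟨⟨h.le, hρ.2⟩, hζ⟩
      have hval : Gf (ρ, ζ) = v ρ ζ * (Real.exp (-(C^2*ζ)) * (φ ρ)⁻¹) - δ * Real.log ρ := rfl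
      exact le_trans (hGoal.trans hle) (le_of_eq hval)
  -- conclude on Ioc × Icc
  have pos_Ioc : ∀ ρ ∈ Set.Ioc (0:ℝ) 1, ∀ ζ ∈ Set.Icc (0:ℝ) Z', 0 ≤ v ρ ζ := by
    intro ρ hρ ζ hζ
    have hφp : (0:ℝ) < φ ρ := lt_of_lt_of_le zero_lt_one (hφpos ρ ⟨hρ.1.le, hρ.2⟩)
    have hB : 0 < Real.exp (-(C^2*ζ)) * (φ ρ)⁻¹ := mul_pos (Real.exp_pos _) (inv_pos.2 hφp)
    by_contra hneg
    push_neg at hneg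
    have hX : v ρ ζ * (Real.exp (-(C^2*ζ)) * (φ ρ)⁻¹) < 0 :=
      mul_neg_of_neg_of_pos hneg hB
    set X := v ρ ζ * (Real.exp (-(C^2*ζ)) * (φ ρ)⁻¹) with hXdef
    have hlog : Real.log ρ ≤ 0 := Real.log_nonpos hρ.1.le hρ.2
    set δ : ℝ := X / (2 * (Real.log ρ - 2)) with hδdef
    have hden : Real.log ρ - 2 < 0 := by linarith
    have hδpos : 0 < δ := div_pos_of_neg_of_neg hX (by linarith)
    have h := key δ hδpos ρ hρ ζ hζ
    -- -(2δ) ≤ X - δ log ρ, i.e. δ (log ρ - 2) ≤ X; but δ(log ρ - 2) = X/2 > X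
    have hne2 : 2 * (Real.log ρ - 2) ≠ 0 := ne_of_lt (by linarith)
    have hcalc : δ * (Real.log ρ - 2) = X / 2 := by
      rw [hδdef, div_mul_eq_mul_div]
      rw [div_eq_div_iff hne2 (two_ne_zero)]
      ring
    nlinarith [h, hcalc, hX]
  intro ρ hρ ζ hζ
  rcases eq_or_lt_of_le hρ.1 with h0 | h0
  · -- ρ = 0 : use continuity
    subst h0
    have hcf : ContinuousWithinAt (fun r => v r ζ) (Set.Icc (0:ℝ) 1) 0 := by
      have : ContinuousOn (fun r : ℝ => v r ζ) (Set.Icc (0:ℝ) 1) :=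
        ContinuousOn.comp hvcont
          ((continuous_id.prodMk continuous_const).continuousOn)
          (fun y hy => ⟨hy, hζ⟩)
      exact this 0 ⟨le_rfl, zero_le_one⟩
    have hcf' : Tendsto (fun r => v r ζ) (𝓝[Set.Ioc (0:ℝ) 1] 0) (𝓝 (v 0 ζ)) :=
      hcf.tendsto.mono_left (nhdsWithin_mono _ (fun x hx => ⟨hx.1.le, hx.2⟩))
    have hne : (𝓝[Set.Ioc (0:ℝ) 1] (0:ℝ)).NeBot := by
      refine mem_closure_iff_nhdsWithin_neBot.1 ?_
      rw [closure_Ioc (zero_ne_one)]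
      exact ⟨le_rfl, zero_le_one⟩
    refine ge_of_tendsto hcf' ?_
    filter_upwards [self_mem_nhdsWithin] with r hr
    exact pos_Ioc r hr ζ hζ
  · exact pos_Ioc ρ ⟨h0, hρ.2⟩ ζ hζ


set_option maxHeartbeats 1000000 in
/-- For a classical solution of the laminar evolution equation
`(1−ρ²)∂_ζu = (1/ρ)∂_ρ(ρ∂_ρu) + λ²e^u` with homogeneous inlet and wall data and
zero flux at the axis, the temperature is nondecreasing along the pipe:
`∂_ζ u ≥ 0`. -/
theorem stmt_16 (lam Z : ℝ) (hlam : 0 < lam) (hZ : 0 < Z)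
    (u uζ uρ w : ℝ → ℝ → ℝ)
    (hucont : ContinuousOn (fun p : ℝ × ℝ => u p.1 p.2)
      (Set.Icc (0:ℝ) 1 ×ˢ Set.Ico (0:ℝ) Z))
    (huζ : ∀ ρ ∈ Set.Ioo (0:ℝ) 1, ∀ ζ ∈ Set.Ioo (0:ℝ) Z,
      HasDerivAt (fun t => u ρ t) (uζ ρ ζ) ζ)
    (huρ : ∀ ρ ∈ Set.Ioo (0:ℝ) 1, ∀ ζ ∈ Set.Ioo (0:ℝ) Z,
      HasDerivAt (fun r => u r ζ) (uρ ρ ζ) ρ)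
    (hw : ∀ ρ ∈ Set.Ioo (0:ℝ) 1, ∀ ζ ∈ Set.Ioo (0:ℝ) Z,
      HasDerivAt (fun r => r * uρ r ζ) (w ρ ζ) ρ)
    (hpde : ∀ ρ ∈ Set.Ioo (0:ℝ) 1, ∀ ζ ∈ Set.Ioo (0:ℝ) Z,
      (1 - ρ ^ 2) * uζ ρ ζ = (1 / ρ) * w ρ ζ + lam ^ 2 * Real.exp (u ρ ζ))
    (hinlet : ∀ ρ ∈ Set.Icc (0:ℝ) 1, u ρ 0 = 0)
    (hwall : ∀ ζ ∈ Set.Ico (0:ℝ) Z, u 1 ζ = 0)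
    (hflux : ∀ ζ ∈ Set.Ioo (0:ℝ) Z,
      Tendsto (fun ρ => ρ * uρ ρ ζ) (nhdsWithin 0 (Set.Ioi 0)) (nhds 0))
    (huζcont : ContinuousOn (fun p : ℝ × ℝ => uζ p.1 p.2)
      (Set.Ioo (0:ℝ) 1 ×ˢ Set.Ioo (0:ℝ) Z)) :
    ∀ ρ ∈ Set.Ioo (0:ℝ) 1, ∀ ζ ∈ Set.Ioo (0:ℝ) Z, 0 ≤ uζ ρ ζ := by
  have hlam2 : (0:ℝ) < lam^2 := pow_pos hlam 2
  -- Step 1 : nonnegativity of u at any positive height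
  have step1 : ∀ h ∈ Set.Ioo (0:ℝ) Z, ∀ ρ' ∈ Set.Icc (0:ℝ) 1, 0 ≤ u ρ' h := by
    intro h hh ρ' hρ'
    have hsub : Set.Icc (0:ℝ) 1 ×ˢ Set.Icc (0:ℝ) h ⊆ Set.Icc (0:ℝ) 1 ×ˢ Set.Ico (0:ℝ) Z :=
      Set.prod_mono subset_rfl (Set.Icc_subset_Ico_iff hh.1.le |>.2 ⟨le_rfl, hh.2⟩)
    have hres : ∀ ζ' ∈ Set.Ioc (0:ℝ) h, ζ' ∈ Set.Ioo (0:ℝ) Z :=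
      fun ζ' hζ' => ⟨hζ'.1, lt_of_le_of_lt hζ'.2 hh.2⟩
    have := minprin h 1 hh.1 le_rfl u uζ uρ w (fun _ _ => 0)
      (hucont.mono hsub)
      (fun ρ hρ ζ' hζ' => huζ ρ hρ ζ' (hres ζ' hζ'))
      (fun ρ hρ ζ' hζ' => huρ ρ hρ ζ' (hres ζ' hζ'))
      (fun ρ hρ ζ' hζ' => hw ρ hρ ζ' (hres ζ' hζ'))
      (fun ρ hρ ζ' hζ' => by
        have hp := hpde ρ hρ ζ' (hres ζ' hζ')
        have he := mul_pos hlam2 (Real.exp_pos (u ρ ζ'))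
        simp only [zero_mul]
        linarith only [hp, he])
      (fun _ _ _ _ => le_rfl)
      (fun _ _ _ _ => zero_le_one)
      (fun ρ hρ => le_of_eq (hinlet ρ hρ).symm)
      (fun ζ' hζ' => le_of_eq (hwall ζ' ⟨hζ'.1, lt_of_le_of_lt hζ'.2 hh.2⟩).symm)
    exact this ρ' hρ' h ⟨hh.1.le, le_rfl⟩
  -- monotonicity in ζ
  intro ρ hρ ζ hζ
  have mono : ∀ t ∈ Set.Ico ζ Z, u ρ ζ ≤ u ρ t := by
    intro t ht
    rcases eq_or_lt_of_le ht.1 with heq | hlt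
    · rw [← heq]
    set h : ℝ := t - ζ with hhdef
    have hh0 : 0 < h := by simp only [hhdef]; linarith
    have hhZ : h < Z := by simp only [hhdef]; linarith [hζ.1, ht.2]
    have hth : ζ + h = t := by simp only [hhdef]; ring
    -- bound for the zeroth order coefficient
    have hsubζ : Set.Icc (0:ℝ) 1 ×ˢ Set.Icc (0:ℝ) ζ ⊆ Set.Icc (0:ℝ) 1 ×ˢ Set.Ico (0:ℝ) Z :=
      Set.prod_mono subset_rfl (Set.Icc_subset_Ico_iff hζ.1.le |>.2 ⟨le_rfl, hζ.2⟩)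
    obtain ⟨Mu, hMu⟩ := (isCompact_Icc.prod isCompact_Icc).exists_bound_of_continuousOn
      (hucont.mono hsubζ)
    set C : ℝ := 1 + lam^2 * Real.exp Mu with hCdef
    have hC1 : (1:ℝ) ≤ C := by
      have := mul_pos hlam2 (Real.exp_pos Mu)
      simp only [hCdef]; linarith
    have hcbound : ∀ ρ' ∈ Set.Icc (0:ℝ) 1, ∀ ζ' ∈ Set.Icc (0:ℝ) ζ,
        lam^2 * Real.exp (u ρ' ζ') ≤ C := by
      intro ρ' hρ' ζ' hζ'
      have h1 : u ρ' ζ' ≤ Mu := by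
        have := hMu (ρ', ζ') ⟨hρ', hζ'⟩
        simp only [Real.norm_eq_abs] at this
        linarith [(abs_le.1 this).1, (abs_le.1 this).2]
      have h2 : Real.exp (u ρ' ζ') ≤ Real.exp Mu := Real.exp_le_exp.2 h1
      have h3 := mul_le_mul_of_nonneg_left h2 hlam2.le
      simp only [hCdef]; linarith
    -- membership facts
    have hmem1 : ∀ ζ' ∈ Set.Ioc (0:ℝ) ζ, ζ' ∈ Set.Ioo (0:ℝ) Z :=
      fun ζ' hζ' => ⟨hζ'.1, lt_of_le_of_lt hζ'.2 hζ.2⟩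
    have hmem2 : ∀ ζ' ∈ Set.Ioc (0:ℝ) ζ, ζ' + h ∈ Set.Ioo (0:ℝ) Z := by
      intro ζ' hζ'
      constructor
      · linarith [hζ'.1]
      · have : ζ' + h ≤ ζ + h := by linarith [hζ'.2]
        rw [hth] at this
        exact lt_of_le_of_lt this ht.2
    have happ := minprin ζ C hζ.1 hC1
      (fun ρ' ζ' => u ρ' (ζ' + h) - u ρ' ζ')
      (fun ρ' ζ' => uζ ρ' (ζ' + h) - uζ ρ' ζ')
      (fun ρ' ζ' => uρ ρ' (ζ' + h) - uρ ρ' ζ')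
      (fun ρ' ζ' => w ρ' (ζ' + h) - w ρ' ζ')
      (fun ρ' ζ' => lam^2 * Real.exp (u ρ' ζ'))
      (by
        have c1 : ContinuousOn (fun p : ℝ × ℝ => u p.1 (p.2 + h))
            (Set.Icc (0:ℝ) 1 ×ˢ Set.Icc (0:ℝ) ζ) := by
          apply ContinuousOn.comp hucont
            ((continuous_fst.prodMk (continuous_snd.add continuous_const)).continuousOn)
          intro p hp
          exact ⟨hp.1, ⟨add_nonneg hp.2.1 hh0.le, by
            have h1 : p.2 + h ≤ ζ + h := by linarith [hp.2.2]
            rw [hth] at h1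
            exact lt_of_le_of_lt h1 ht.2⟩⟩
        exact c1.sub (hucont.mono hsubζ))
      (fun ρ' hρ' ζ' hζ' => by
        have h1 : HasDerivAt (fun s => u ρ' (s + h)) (uζ ρ' (ζ' + h)) ζ' := by
          have hcomp := (huζ ρ' hρ' (ζ'+h) (hmem2 ζ' hζ')).comp ζ'
            ((hasDerivAt_id ζ').add_const h)
          exact hcomp.congr_deriv (mul_one _)
        exact h1.sub (huζ ρ' hρ' ζ' (hmem1 ζ' hζ')))
      (fun ρ' hρ' ζ' hζ' =>
        (huρ ρ' hρ' (ζ'+h) (hmem2 ζ' hζ')).sub (huρ ρ' hρ' ζ' (hmem1 ζ' hζ')))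
      (fun ρ' hρ' ζ' hζ' => by
        have h1 := (hw ρ' hρ' (ζ'+h) (hmem2 ζ' hζ')).sub (hw ρ' hρ' ζ' (hmem1 ζ' hζ'))
        exact h1.congr_of_eventuallyEq (Filter.Eventually.of_forall (fun y => by simp only [Pi.sub_apply]; ring)))
      (fun ρ' hρ' ζ' hζ' => by
        have p1 := hpde ρ' hρ' (ζ'+h) (hmem2 ζ' hζ')
        have p2 := hpde ρ' hρ' ζ' (hmem1 ζ' hζ')
        have h1 := Real.add_one_le_exp (u ρ' (ζ'+h) - u ρ' ζ')
        have h2 : Real.exp (u ρ' ζ') * (u ρ' (ζ'+h) - u ρ' ζ' + 1) ≤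
            Real.exp (u ρ' ζ' + (u ρ' (ζ'+h) - u ρ' ζ')) := by
          rw [Real.exp_add]
          exact mul_le_mul_of_nonneg_left h1 (Real.exp_pos _).le
        have h3 : u ρ' ζ' + (u ρ' (ζ'+h) - u ρ' ζ') = u ρ' (ζ'+h) := by ring
        rw [h3] at h2
        have h4 := mul_le_mul_of_nonneg_left h2 hlam2.le
        nlinarith only [p1, p2, h4])
      (fun ρ' _ ζ' _ => le_of_lt (mul_pos hlam2 (Real.exp_pos _)))
      (fun ρ' hρ' ζ' hζ' => hcbound ρ' ⟨hρ'.1.le, hρ'.2.le⟩ ζ' ⟨hζ'.1.le, hζ'.2⟩)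
      (fun ρ' hρ' => by
        show 0 ≤ u ρ' (0 + h) - u ρ' 0
        rw [zero_add, hinlet ρ' hρ']
        have := step1 h ⟨hh0, hhZ⟩ ρ' hρ'
        linarith)
      (fun ζ' hζ' => by
        show 0 ≤ u 1 (ζ' + h) - u 1 ζ'
        have hm : ζ' + h < Z := by
          have h1 : ζ' + h ≤ ζ + h := by linarith [hζ'.2]
          rw [hth] at h1
          exact lt_of_le_of_lt h1 ht.2
        rw [hwall (ζ' + h) ⟨by linarith [hζ'.1], hm⟩,
          hwall ζ' ⟨hζ'.1, lt_of_le_of_lt hζ'.2 hζ.2⟩]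
        norm_num)
    have hfin : 0 ≤ u ρ (ζ + h) - u ρ ζ := happ ρ ⟨hρ.1.le, hρ.2.le⟩ ζ ⟨hζ.1.le, le_rfl⟩
    rw [hth] at hfin
    linarith only [hfin]
  exact deriv_nonneg_of_right_min hζ.2 (huζ ρ hρ ζ hζ) mono
end
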